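/- arXiv:1410.2706 — 11 statements merged into one kernel-verified Lean document; each statement's English description precedes it below -/
import Mathlib

section
/- Let n ≥ 2, let I ⊆ ℝ be an open interval, and let f ∈ C^n(I). Let a = (a_1,…,a_n) and b = (b_1,…,b_n) in I^n with a_1 ≤ … ≤ a_n and b_1 ≤ … ≤ b_n. Suppose there exists a continuous map y : [0,1] → I^n with y_1(t) ≤ … ≤ y_n(t) for all t, y(0) = a, y(1) = b, such that y is differentiable at all but at most countably many t ∈ [0,1], y_i(t) ≠ y_j(t) for i ≠ j for all but at most countably many t ∈ [0,1], and for each k ∈ {0,1,…,n−1} the function t ↦ E_k(y(t)) is nondecreasing on [0,1]. Let S ⊆ {0,1,…,n−1} be the set of all k with E_k(a) < E_k(b). If (−1)^{n+k}(x^k f'(x))^{(n−1)} ≤ 0 for all x ∈ I and all k ∈ S, then f(a_1)+f(a_2)+…+f(a_n) ≤ f(b_1)+f(b_2)+…+f(b_n). -/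
open Set Filter Topology Polynomial Finset


lemma mono_of_deriv_nonneg_off_countable {g : ℝ → ℝ} {C : Set ℝ} (hC : C.Countable)
    (hg : ContinuousOn g (Set.Icc 0 1))
    (hd : ∀ t ∈ Set.Ioo (0:ℝ) 1 \ C, ∃ d : ℝ, 0 ≤ d ∧ HasDerivAt g d t) :
    g 0 ≤ g 1 := by
  have key : ∀ ε : ℝ, 0 < ε → g 0 ≤ g 1 + ε * 3 := by
    intro ε hε
    have hC' : (C ∪ {0, 1} : Set ℝ).Countable :=
      hC.union (((Set.countable_singleton (1:ℝ)).insert 0))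
    obtain ⟨u, hu⟩ := hC'.exists_eq_range ⟨0, Or.inr (Or.inl rfl)⟩
    classical
    set term : ℝ → ℕ → ℝ := fun t k => if u k < t then ε * (2:ℝ)⁻¹ ^ k else 0 with hterm
    have hterm_nonneg : ∀ t k, 0 ≤ term t k := by
      intro t k; simp only [term]; split
      · positivity
      · exact le_rfl
    have hterm_le : ∀ t k, term t k ≤ ε * (2:ℝ)⁻¹ ^ k := by
      intro t k; simp only [term]; split
      · exact le_rfl
      · positivity
    have hsum0 : Summable (fun k : ℕ => ε * (2:ℝ)⁻¹ ^ k) :=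
      (summable_geometric_of_lt_one (by norm_num) (by norm_num)).mul_left ε
    have hsum : ∀ t, Summable (term t) := fun t =>
      Summable.of_nonneg_of_le (hterm_nonneg t) (hterm_le t) hsum0
    set W : ℝ → ℝ := fun t => ∑' k, term t k with hWdef
    have hWnonneg : ∀ t, 0 ≤ W t := fun t => tsum_nonneg (hterm_nonneg t)
    have hWmono : ∀ {s t : ℝ}, s ≤ t → W s ≤ W t := by
      intro s t hst
      refine Summable.tsum_le_tsum (fun k => ?_) (hsum s) (hsum t)
      by_cases h : u k < s
      · have h2 : u k < t := h.trans_le hst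
        simp only [term, if_pos h, if_pos h2]; exact le_rfl
      · simp only [term, if_neg h]; exact hterm_nonneg t k
    have hWle : ∀ t, W t ≤ ε * 2 := by
      intro t
      calc W t ≤ ∑' k, ε * (2:ℝ)⁻¹ ^ k := Summable.tsum_le_tsum (hterm_le t) (hsum t) hsum0
      _ = ε * (1 - 2⁻¹)⁻¹ := by
            rw [tsum_mul_left, tsum_geometric_of_lt_one (by norm_num) (by norm_num)]
      _ = ε * 2 := by norm_num
    have hsum_ite : Summable (fun j : ℕ => if j = (Classical.arbitrary ℕ) then ε else 0) := by
      exact summable_of_ne_finset_zero (s := {Classical.arbitrary ℕ})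
        (fun j hj => if_neg (by simpa using hj))
    have hWjump : ∀ (k : ℕ) (t' : ℝ), u k < t' → W (u k) + ε * (2:ℝ)⁻¹ ^ k ≤ W t' := by
      intro k t' hk
      have hsum_ite : Summable (fun j : ℕ => if j = k then ε * (2:ℝ)⁻¹ ^ k else 0) :=
        summable_of_ne_finset_zero (s := {k}) (fun j hj => if_neg (by simpa using hj))
      have h1 : W (u k) + ε * (2:ℝ)⁻¹ ^ k
          = ∑' j, (term (u k) j + if j = k then ε * (2:ℝ)⁻¹ ^ k else 0) := by
        rw [Summable.tsum_add (hsum _) hsum_ite, hWdef]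
        congr 1
        simp [tsum_ite_eq]
      rw [h1]
      refine Summable.tsum_le_tsum (fun j => ?_) ((hsum _).add hsum_ite) (hsum t')
      rcases eq_or_ne j k with rfl | hjk
      · simp only [term, if_neg (lt_irrefl (u j)), if_pos rfl, zero_add, if_pos hk]
        exact le_rfl
      · rw [if_neg hjk, add_zero]
        by_cases h : u j < u k
        · have h2 : u j < t' := h.trans hk
          simp only [term, if_pos h, if_pos h2]; exact le_rfl
        · simp only [term, if_neg h]; exact hterm_nonneg t' j
    set A : Set ℝ := {t | t ∈ Set.Icc (0:ℝ) 1 ∧ g 0 ≤ g t + ε * t + W t} with hA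
    have h0A : (0:ℝ) ∈ A := ⟨by simp, by nlinarith [hWnonneg 0]⟩
    have hAne : A.Nonempty := ⟨0, h0A⟩
    have hAbdd : BddAbove A := ⟨1, fun t ht => ht.1.2⟩
    set c := sSup A with hc
    have hcIcc : c ∈ Set.Icc (0:ℝ) 1 :=
      ⟨le_csSup hAbdd h0A, csSup_le hAne (fun t ht => ht.1.2)⟩
    have hcA : c ∈ A := by
      refine ⟨hcIcc, ?_⟩
      have hclos : c ∈ closure A := csSup_mem_closure hAne hAbdd
      have hnb : (𝓝[A] c).NeBot := mem_closure_iff_nhdsWithin_neBot.1 hclos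
      have hcont : ContinuousWithinAt (fun t => g t + ε * t) A c :=
        ((hg c hcIcc).add (continuousWithinAt_const.mul continuousWithinAt_id)).mono
          (fun t ht => ht.1)
      have hev : ∀ᶠ t in 𝓝[A] c, g 0 - W c ≤ g t + ε * t := by
        filter_upwards [eventually_mem_nhdsWithin] with t ht
        have h2 := ht.2
        have hWt : W t ≤ W c := hWmono (le_csSup hAbdd ht)
        linarith
      have h9 := ge_of_tendsto hcont hev
      simp only at h9
      linarith
    rcases eq_or_lt_of_le hcIcc.2 with hc1 | hc1
    · have h2 := hcA.2
      rw [hc1] at h2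
      linarith [hWle (1:ℝ)]
    · exfalso
      have hget : ∃ t', t' ∈ A ∧ c < t' := by
        by_cases hbad : c ∈ (C ∪ {0,1} : Set ℝ)
        · rw [hu] at hbad
          obtain ⟨k, hk⟩ := hbad
          have hδ : 0 < ε * (2:ℝ)⁻¹ ^ k := by positivity
          have hnb : (𝓝[Set.Ioc c 1] c).NeBot := by
            refine mem_closure_iff_nhdsWithin_neBot.1 ?_
            rw [closure_Ioc hc1.ne]
            exact ⟨le_rfl, hc1.le⟩
          have hgc : ContinuousWithinAt g (Set.Ioc c 1) c :=
            (hg c hcIcc).mono (fun t ht => ⟨le_trans hcIcc.1 ht.1.le, ht.2⟩)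
          have hev : ∀ᶠ t in 𝓝[Set.Ioc c 1] c,
              g c - ε * (2:ℝ)⁻¹ ^ k < g t ∧ t ∈ Set.Ioc c 1 := by
            refine (hgc.eventually (eventually_gt_nhds (by linarith))).and
              eventually_mem_nhdsWithin
          obtain ⟨t', hgt', ht'⟩ := hev.exists
          refine ⟨t', ⟨⟨le_trans hcIcc.1 ht'.1.le, ht'.2⟩, ?_⟩, ht'.1⟩
          have hjump := hWjump k t' (hk ▸ ht'.1)
          rw [hk] at hjump
          have h2 := hcA.2
          have : ε * c ≤ ε * t' := by nlinarith [ht'.1.le]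
          linarith
        · have hcIoo : c ∈ Set.Ioo (0:ℝ) 1 \ C := by
            constructor
            · refine ⟨lt_of_le_of_ne hcIcc.1 ?_, hc1⟩
              intro h0; exact hbad (Or.inr (Or.inl h0.symm))
            · intro hcC; exact hbad (Or.inl hcC)
          obtain ⟨d, hd0, hderiv⟩ := hd c hcIoo
          have htend : Tendsto (slope g c) (𝓝[≠] c) (𝓝 d) :=
            hasDerivAt_iff_tendsto_slope.1 hderiv
          have h1 : ∀ᶠ t in 𝓝[>] c, -ε < slope g c t := by
            have h := htend.eventually (eventually_gt_nhds (show -ε < d by linarith))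
            exact h.filter_mono
              (nhdsWithin_mono c (fun x hx => Set.mem_compl_singleton_iff.mpr (ne_of_gt hx)))
          have h2 : ∀ᶠ t in 𝓝[>] c, t ∈ Set.Ioc c 1 :=
            Ioc_mem_nhdsGT_of_mem ⟨le_rfl, hc1⟩
          obtain ⟨t', hslope, ht'⟩ := (h1.and h2).exists
          refine ⟨t', ⟨⟨le_trans hcIcc.1 ht'.1.le, ht'.2⟩, ?_⟩, ht'.1⟩
          rw [slope_def_field] at hslope
          have hpos : 0 < t' - c := by linarith [ht'.1]
          have hgc : g c - ε * (t' - c) < g t' := by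
            have := (lt_div_iff₀ hpos).1 hslope
            nlinarith
          have h3 := hcA.2
          have hW : W c ≤ W t' := hWmono ht'.1.le
          nlinarith
      obtain ⟨t', ht'A, ht'c⟩ := hget
      exact absurd (le_csSup hAbdd ht'A) (not_le.2 ht'c)
  by_contra hlt
  push_neg at hlt
  have h1 : (0:ℝ) < (g 0 - g 1)/6 := by linarith
  have := key _ h1
  linarith


lemma contDiff_polyeval (p : ℝ[X]) : ContDiff ℝ (⊤ : ℕ∞) fun z : ℝ => p.eval z := by
  induction p using Polynomial.induction_on' with
  | add p q hp hq => simpa using hp.add hq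
  | monomial n a => simpa [Polynomial.eval_monomial] using contDiff_const.mul (contDiff_id.pow n)

lemma polyeval_iteratedDeriv (p : ℝ[X]) (m : ℕ) :
    iteratedDeriv m (fun z : ℝ => p.eval z) = fun z => (Polynomial.derivative^[m] p).eval z := by
  induction m generalizing p with
  | zero => simp [iteratedDeriv_zero]
  | succ m ih =>
      rw [iteratedDeriv_succ']
      have h : deriv (fun z : ℝ => p.eval z) = fun z => (Polynomial.derivative p).eval z :=
        funext fun z => Polynomial.deriv (p := p)
      rw [h, ih, Function.iterate_succ_apply]

lemma iteratedDeriv_sub_on {s : Set ℝ} (hs : IsOpen s) :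
    ∀ (m : ℕ) (A B : ℝ → ℝ), ContDiffOn ℝ m A s → ContDiffOn ℝ m B s →
      ∀ x ∈ s, iteratedDeriv m (fun z => A z - B z) x = iteratedDeriv m A x - iteratedDeriv m B x := by
  intro m
  induction m with
  | zero => intro A B _ _ x _; simp [iteratedDeriv_zero]
  | succ m ih =>
      intro A B hA hB x hx
      have hA1 : DifferentiableOn ℝ A s := hA.differentiableOn (by simp)
      have hB1 : DifferentiableOn ℝ B s := hB.differentiableOn (by simp)
      have heq : Set.EqOn (deriv fun z => A z - B z) (fun z => deriv A z - deriv B z) s := by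
        intro z hz
        exact deriv_sub ((hA1 z hz).differentiableAt (hs.mem_nhds hz))
          ((hB1 z hz).differentiableAt (hs.mem_nhds hz))
      have hA' : ContDiffOn ℝ m (deriv A) s := hA.deriv_of_isOpen hs (by norm_cast)
      have hB' : ContDiffOn ℝ m (deriv B) s := hB.deriv_of_isOpen hs (by norm_cast)
      rw [iteratedDeriv_succ', iteratedDeriv_succ', iteratedDeriv_succ',
        heq.iteratedDeriv_of_isOpen hs m hx]
      exact ih _ _ hA' hB' x hx

lemma iterated_rolle {s : Set ℝ} (hs : IsOpen s) (hconn : s.OrdConnected) :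
    ∀ (m : ℕ) (g : ℝ → ℝ), ContDiffOn ℝ m g s → ∀ x : Fin (m+1) → ℝ, StrictMono x →
      (∀ i, x i ∈ s) → (∀ i, g (x i) = 0) → ∃ ξ ∈ s, iteratedDeriv m g ξ = 0 := by
  intro m
  induction m with
  | zero => intro g _ x _ hxs h0; exact ⟨x 0, hxs 0, by simpa using h0 0⟩
  | succ m ih =>
      intro g hg x hx hxs h0
      have hc : ∀ i : Fin (m+1), ∃ c ∈ Set.Ioo (x i.castSucc) (x i.succ), deriv g c = 0 := by
        intro i
        refine exists_deriv_eq_zero (hx (Fin.castSucc_lt_succ (i := i))) ?_ ((h0 _).trans (h0 _).symm)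
        exact hg.continuousOn.mono (hconn.out (hxs i.castSucc) (hxs i.succ))
      choose c hcmem hczero using hc
      have hcs : ∀ i, c i ∈ s := fun i =>
        hconn.out (hxs i.castSucc) (hxs i.succ) (Set.Ioo_subset_Icc_self (hcmem i))
      have hcmono : StrictMono c := by
        intro i j hij
        calc c i < x i.succ := (hcmem i).2
        _ ≤ x j.castSucc := hx.monotone (by
              rw [Fin.le_def]
              simp only [Fin.val_succ, Fin.coe_castSucc]
              exact hij)
        _ < c j := (hcmem j).1
      have hg' : ContDiffOn ℝ m (deriv g) s := hg.deriv_of_isOpen hs (by norm_cast)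
      obtain ⟨ξ, hξ, h⟩ := ih (deriv g) hg' c hcmono hcs hczero
      exact ⟨ξ, hξ, by rwa [iteratedDeriv_succ']⟩

lemma ddiff_mvt {s : Set ℝ} (hs : IsOpen s) (hconn : s.OrdConnected) (m : ℕ)
    (H : ℝ → ℝ) (hH : ContDiffOn ℝ m H s) (x : Fin (m+1) → ℝ) (hx : StrictMono x)
    (hxs : ∀ i, x i ∈ s) :
    ∃ ξ ∈ s, ∑ i, H (x i) * ∏ j ∈ Finset.univ.erase i, (x i - x j)⁻¹
      = iteratedDeriv m H ξ / (Nat.factorial m : ℝ) := by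
  classical
  have hinj : Set.InjOn x (Finset.univ : Finset (Fin (m+1))) := fun i _ j _ h => hx.injective h
  set r : Fin (m+1) → ℝ := fun i => H (x i) with hr
  set P := Lagrange.interpolate Finset.univ x r with hP
  have hbasis_coeff : ∀ i : Fin (m+1),
      (Lagrange.basis Finset.univ x i).coeff m = ∏ j ∈ Finset.univ.erase i, (x i - x j)⁻¹ := by
    intro i
    rw [Lagrange.basis]
    have h1 : ∀ j ∈ Finset.univ.erase i,
        Lagrange.basisDivisor (x i) (x j) = C ((x i - x j)⁻¹) * (X - C (x j)) := fun j _ => rfl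
    rw [Finset.prod_congr rfl h1, Finset.prod_mul_distrib, ← map_prod, Polynomial.coeff_C_mul]
    have hmonic : (∏ j ∈ Finset.univ.erase i, (X - C (x j))).Monic :=
      monic_prod_of_monic _ _ fun j _ => monic_X_sub_C _
    have hdeg : (∏ j ∈ Finset.univ.erase i, (X - C (x j))).natDegree = m := by
      rw [Polynomial.natDegree_prod _ _ (fun j _ => X_sub_C_ne_zero (x j))]
      simp [Polynomial.natDegree_X_sub_C, Finset.card_erase_of_mem]
    have h2 := hmonic.coeff_natDegree
    rw [hdeg] at h2
    rw [h2, mul_one]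
  have hPcoeff : P.coeff m = ∑ i, H (x i) * ∏ j ∈ Finset.univ.erase i, (x i - x j)⁻¹ := by
    rw [hP, Lagrange.interpolate_apply, Polynomial.finset_sum_coeff]
    refine Finset.sum_congr rfl (fun i _ => ?_)
    rw [Polynomial.coeff_C_mul, hbasis_coeff]
  have hPdeg : P.natDegree ≤ m := by
    rcases eq_or_ne P 0 with h0 | h0
    · simp [h0]
    · have h3 : P.natDegree < m + 1 := by
        have h2 := Lagrange.degree_interpolate_lt r hinj
        rw [← hP] at h2
        rw [Polynomial.natDegree_lt_iff_degree_lt h0]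
        simpa using h2
      omega
  have hPC : ContDiffOn ℝ m (fun z : ℝ => P.eval z) s :=
    ((contDiff_polyeval P).of_le (mod_cast le_top)).contDiffOn
  have hgC : ContDiffOn ℝ m (fun z => H z - P.eval z) s := hH.sub hPC
  have hzero : ∀ i, H (x i) - P.eval (x i) = 0 := by
    intro i
    rw [hP, Lagrange.eval_interpolate_at_node r hinj (Finset.mem_univ i)]
    simp [hr]
  obtain ⟨ξ, hξs, hξ⟩ := iterated_rolle hs hconn m _ hgC x hx hxs hzero
  rw [iteratedDeriv_sub_on hs m H _ hH hPC ξ hξs] at hξ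
  have hPev : iteratedDeriv m (fun z : ℝ => P.eval z) ξ = (Nat.factorial m : ℝ) * P.coeff m := by
    rw [polyeval_iteratedDeriv]
    have hdeg0 : (Polynomial.derivative^[m] P).natDegree = 0 := by
      have := Polynomial.natDegree_iterate_derivative P m
      omega
    show Polynomial.eval ξ (Polynomial.derivative^[m] P) = _
    rw [Polynomial.eq_C_of_natDegree_le_zero hdeg0.le, Polynomial.eval_C,
      Polynomial.coeff_iterate_derivative]
    norm_num [Nat.descFactorial_self, nsmul_eq_mul]
  rw [hPev] at hξ
  have hm : ((Nat.factorial m : ℕ) : ℝ) ≠ 0 := by exact_mod_cast (Nat.factorial_pos m).ne'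
  refine ⟨ξ, hξs, ?_⟩
  rw [hPcoeff.symm]
  rw [eq_div_iff hm, mul_comm]
  linarith [hξ]


-- Vieta evaluation
lemma vieta_eval {N : ℕ} (s : Finset (Fin N)) (v : Fin N → ℝ) (x : ℝ) :
    ∏ j ∈ s, (x - v j) = ∑ k ∈ Finset.range (s.card + 1),
      (-1:ℝ)^(s.card - k) * (∑ T ∈ s.powersetCard (s.card - k), ∏ j ∈ T, v j) * x ^ k := by
  classical
  have hP : (∏ j ∈ s, (X - C (v j))) = ((s.val.map v).map (fun t => X - C t)).prod := by
    rw [Finset.prod, Multiset.map_map]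
    rfl
  have hdeg : (∏ j ∈ s, (X - C (v j))).natDegree = s.card := by
    rw [Polynomial.natDegree_prod _ _ (fun j _ => X_sub_C_ne_zero (v j))]
    simp [Polynomial.natDegree_X_sub_C]
  have hcoeff : ∀ k, k ≤ s.card →
      (∏ j ∈ s, (X - C (v j))).coeff k
        = (-1:ℝ)^(s.card - k) * ∑ T ∈ s.powersetCard (s.card - k), ∏ j ∈ T, v j := by
    intro k hk
    rw [hP, Multiset.prod_X_sub_C_coeff (s.val.map v) (by simpa using hk)]
    congr 1
    · simp
    · rw [show Multiset.card (s.val.map v) = s.card by simp]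
      exact Finset.esymm_map_val v s (s.card - k)
  have := Polynomial.eval_eq_sum_range (x := x) (p := ∏ j ∈ s, (X - C (v j)))
  rw [hdeg] at this
  calc ∏ j ∈ s, (x - v j) = (∏ j ∈ s, (X - C (v j))).eval x := by simp [Polynomial.eval_prod]
  _ = ∑ k ∈ Finset.range (s.card + 1), (∏ j ∈ s, (X - C (v j))).coeff k * x ^ k := this
  _ = _ := by
      refine Finset.sum_congr rfl (fun k hk => ?_)
      rw [hcoeff k (by simpa [Nat.lt_succ_iff] using hk)]

-- swap sum over subsets
lemma swap_powerset_sum {N : ℕ} (M : ℕ) (hM : 1 ≤ M) (z v : Fin N → ℝ) :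
    ∑ T ∈ (Finset.univ : Finset (Fin N)).powersetCard M, ∑ i ∈ T, (∏ j ∈ T.erase i, z j) * v i
      = ∑ i : Fin N, (∑ U ∈ ((Finset.univ : Finset (Fin N)).erase i).powersetCard (M-1),
          ∏ j ∈ U, z j) * v i := by
  classical
  rw [Finset.sum_comm' (s := (Finset.univ : Finset (Fin N)).powersetCard M)
    (t := fun T => T) (s' := fun i => ((Finset.univ : Finset (Fin N)).powersetCard M).filter
      (fun T => i ∈ T)) (t' := Finset.univ)
    (h := by intro T i; simp [Finset.mem_filter, and_comm])]
  refine Finset.sum_congr rfl (fun i _ => ?_)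
  rw [Finset.sum_mul]
  refine Finset.sum_bij' (fun T _ => T.erase i) (fun U _ => insert i U) ?_ ?_ ?_ ?_ ?_
  · intro T hT
    rw [Finset.mem_filter, Finset.mem_powersetCard] at hT
    rw [Finset.mem_powersetCard]
    exact ⟨fun j hj => Finset.mem_erase.2 ⟨(Finset.mem_erase.1 hj).1, Finset.mem_univ j⟩,
      by rw [Finset.card_erase_of_mem hT.2, hT.1.2]⟩
  · intro U hU
    rw [Finset.mem_powersetCard] at hU
    have hiU : i ∉ U := fun h => (Finset.mem_erase.1 (hU.1 h)).1 rfl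
    rw [Finset.mem_filter, Finset.mem_powersetCard]
    refine ⟨⟨fun j _ => Finset.mem_univ j, ?_⟩, Finset.mem_insert_self i U⟩
    rw [Finset.card_insert_of_notMem hiU, hU.2]
    omega
  · intro T hT
    rw [Finset.mem_filter] at hT
    exact Finset.insert_erase hT.2
  · intro U hU
    rw [Finset.mem_powersetCard] at hU
    exact Finset.erase_insert (fun h => (Finset.mem_erase.1 (hU.1 h)).1 rfl)
  · intro T hT
    rfl

-- derivative nonneg from monotonicity
lemma deriv_nonneg_of_monotoneOn {φ : ℝ → ℝ} {t d : ℝ} (ht : t ∈ Set.Ioo (0:ℝ) 1)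
    (hmono : MonotoneOn φ (Set.Icc 0 1)) (hd : HasDerivAt φ d t) : 0 ≤ d := by
  have htend : Tendsto (slope φ t) (𝓝[≠] t) (𝓝 d) := hasDerivAt_iff_tendsto_slope.1 hd
  have htend' : Tendsto (slope φ t) (𝓝[>] t) (𝓝 d) :=
    htend.mono_left (nhdsWithin_mono t (fun u hu => Set.mem_compl_singleton_iff.mpr (ne_of_gt hu)))
  have hev : ∀ᶠ u in 𝓝[>] t, 0 ≤ slope φ t u := by
    filter_upwards [Ioc_mem_nhdsGT_of_mem (Set.mem_Ico.2 ⟨le_rfl, ht.2⟩)] with u hu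
    rw [slope_def_field]
    apply div_nonneg _ (by linarith [hu.1])
    have := hmono (Set.mem_Icc.2 ⟨ht.1.le, ht.2.le⟩) (Set.mem_Icc.2 ⟨le_trans ht.1.le hu.1.le, hu.2⟩) hu.1.le
    linarith
  exact ge_of_tendsto htend' hev

lemma key_identity (n : ℕ) (hn : 1 ≤ n) (z : Fin n → ℝ) (hz : Function.Injective z)
    (φ : Fin n → ℝ) (i : Fin n) :
    ∑ k ∈ Finset.range n, ((-1:ℝ)^(n-1-k) * ∑ j, (z j ^ k * φ j) *
        ∏ l ∈ Finset.univ.erase j, (z j - z l)⁻¹) *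
      (∑ U ∈ (Finset.univ.erase i).powersetCard (n-1-k), ∏ m ∈ U, z m)
    = φ i := by
  classical
  set w : Fin n → ℝ := fun j => ∏ l ∈ Finset.univ.erase j, (z j - z l)⁻¹ with hw
  set σ : ℕ → ℝ := fun k => ∑ U ∈ (Finset.univ.erase i).powersetCard (n-1-k), ∏ m ∈ U, z m
    with hσ
  have hcard : (Finset.univ.erase i).card = n - 1 := by
    rw [Finset.card_erase_of_mem (Finset.mem_univ i)]; simp
  have hvieta : ∀ x : ℝ, ∏ m ∈ Finset.univ.erase i, (x - z m)
      = ∑ k ∈ Finset.range n, (-1:ℝ)^(n-1-k) * σ k * x ^ k := by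
    intro x
    have h := vieta_eval (Finset.univ.erase i) z x
    rw [hcard, show n - 1 + 1 = n from by omega] at h
    exact h
  have h1 : ∑ k ∈ Finset.range n, ((-1:ℝ)^(n-1-k) * ∑ j, (z j ^ k * φ j) * w j) * σ k
      = ∑ j, (φ j * w j) * ∏ m ∈ Finset.univ.erase i, (z j - z m) := by
    have h2 : ∀ k ∈ Finset.range n,
        ((-1:ℝ)^(n-1-k) * ∑ j, (z j ^ k * φ j) * w j) * σ k
          = ∑ j, (φ j * w j) * ((-1:ℝ)^(n-1-k) * σ k * z j ^ k) := by
      intro k _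
      rw [show ((-1:ℝ)^(n-1-k) * ∑ j, (z j ^ k * φ j) * w j) * σ k
        = (∑ j, (z j ^ k * φ j) * w j) * ((-1:ℝ)^(n-1-k) * σ k) from by ring,
        Finset.sum_mul]
      exact Finset.sum_congr rfl (fun j _ => by ring)
    rw [Finset.sum_congr rfl h2, Finset.sum_comm]
    refine Finset.sum_congr rfl (fun j _ => ?_)
    rw [← Finset.mul_sum, hvieta (z j)]
  rw [h1, Finset.sum_eq_single i ?_ (fun h => absurd (Finset.mem_univ i) h)]
  · have hwi : w i * ∏ m ∈ Finset.univ.erase i, (z i - z m) = 1 := by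
      rw [hw]
      rw [← Finset.prod_mul_distrib]
      rw [Finset.prod_congr rfl (fun l hl => inv_mul_cancel₀
        (sub_ne_zero.2 (hz.ne (Ne.symm (Finset.mem_erase.1 hl).1))))]
      exact Finset.prod_const_one
    rw [mul_assoc, hwi, mul_one]
  · intro j _ hj
    rw [Finset.prod_eq_zero (Finset.mem_erase.2 ⟨hj, Finset.mem_univ j⟩) (sub_self (z j)),
      mul_zero]


lemma ddiff_mvt' {s : Set ℝ} (hs : IsOpen s) (hconn : s.OrdConnected) (n : ℕ) (hn : 1 ≤ n)
    (H : ℝ → ℝ) (hH : ContDiffOn ℝ (n-1) H s) (x : Fin n → ℝ) (hx : StrictMono x)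
    (hxs : ∀ i, x i ∈ s) :
    ∃ ξ ∈ s, ∑ i, H (x i) * ∏ j ∈ Finset.univ.erase i, (x i - x j)⁻¹
      = iteratedDeriv (n-1) H ξ / (Nat.factorial (n-1) : ℝ) := by
  obtain ⟨m, rfl⟩ : ∃ m, n = m + 1 := ⟨n - 1, by omega⟩
  simp only [Nat.add_sub_cancel] at hH ⊢
  exact ddiff_mvt hs hconn m H hH x hx hxs

lemma iteratedDerivWithin_eq_of_isOpen {s : Set ℝ} (hs : IsOpen s) (F : ℝ → ℝ) (m : ℕ)
    {x : ℝ} (hx : x ∈ s) : iteratedDerivWithin m F s x = iteratedDeriv m F x := by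
  rw [iteratedDerivWithin, iteratedDeriv, iteratedFDerivWithin_of_isOpen m hs hx]



/-- Reversed elementary symmetric polynomials:
`E n k y = e_{n-k}(y₁,…,yₙ)`, the sum of all products of `n - k` of the coordinates. -/
def E (n k : ℕ) (y : Fin n → ℝ) : ℝ :=
  ∑ t ∈ (Finset.univ : Finset (Fin n)).powersetCard (n - k), ∏ i ∈ t, y i

theorem generalized_sum_inequality_of_dominates
    (n : ℕ) (hn : 2 ≤ n) (I : Set ℝ) (hIopen : IsOpen I) (hIconn : I.OrdConnected)
    (f : ℝ → ℝ) (hf : ContDiffOn ℝ n f I)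
    (a b : Fin n → ℝ) (haI : ∀ i, a i ∈ I) (hbI : ∀ i, b i ∈ I)
    (hamono : Monotone a) (hbmono : Monotone b)
    (y : ℝ → Fin n → ℝ)
    (hy0 : y 0 = a) (hy1 : y 1 = b)
    (hycont : ContinuousOn y (Set.Icc 0 1))
    (hyI : ∀ t ∈ Set.Icc (0:ℝ) 1, ∀ i, y t i ∈ I)
    (hymono : ∀ t ∈ Set.Icc (0:ℝ) 1, Monotone (y t))
    (hydiff : ∃ C : Set ℝ, C.Countable ∧
      ∀ t ∈ Set.Icc (0:ℝ) 1 \ C, DifferentiableWithinAt ℝ y (Set.Icc 0 1) t)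
    (hyneq : ∃ C : Set ℝ, C.Countable ∧
      ∀ t ∈ Set.Icc (0:ℝ) 1 \ C, ∀ i j : Fin n, i ≠ j → y t i ≠ y t j)
    (hyE : ∀ k < n, MonotoneOn (fun t => E n k (y t)) (Set.Icc 0 1))
    (hS : ∀ k < n, E n k a < E n k b →
      ∀ x ∈ I, (-1 : ℝ) ^ (n + k) *
        iteratedDerivWithin (n - 1) (fun z => z ^ k * derivWithin f I z) I x ≤ 0) :
    ∑ i, f (a i) ≤ ∑ i, f (b i) := by
  classical
  obtain ⟨C1, hC1c, hC1⟩ := hydiff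
  obtain ⟨C2, hC2c, hC2⟩ := hyneq
  -- continuity of g
  have hfc : ContinuousOn f I := hf.continuousOn
  have hgcont : ContinuousOn (fun t => ∑ i, f (y t i)) (Set.Icc 0 1) := by
    refine continuousOn_finset_sum _ (fun i _ => ?_)
    exact hfc.comp ((continuous_apply i).comp_continuousOn hycont) (fun t ht => hyI t ht i)
  -- derivative of f
  have hfdiff : DifferentiableOn ℝ f I :=
    hf.differentiableOn (by exact_mod_cast (by omega : n ≠ 0))
  have hfd : ∀ x ∈ I, HasDerivAt f (deriv f x) x := fun x hx =>
    ((hfdiff x hx).differentiableAt (hIopen.mem_nhds hx)).hasDerivAt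
  -- main derivative estimate
  have hder : ∀ t ∈ Set.Ioo (0:ℝ) 1 \ (C1 ∪ C2), ∃ d : ℝ, 0 ≤ d ∧
      HasDerivAt (fun t => ∑ i, f (y t i)) d t := by
    rintro t ⟨htI, htC⟩
    have htIcc : t ∈ Set.Icc (0:ℝ) 1 := ⟨htI.1.le, htI.2.le⟩
    have hyda : DifferentiableAt ℝ y t :=
      (hC1 t ⟨htIcc, fun h => htC (Or.inl h)⟩).differentiableAt
        (Icc_mem_nhds htI.1 htI.2)
    set z : Fin n → ℝ := y t with hz
    set v : Fin n → ℝ := deriv y t with hv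
    have hzI : ∀ i, z i ∈ I := hyI t htIcc
    have hzinj : Function.Injective z := by
      intro i j hij
      by_contra hne
      exact hC2 t ⟨htIcc, fun h => htC (Or.inr h)⟩ i j hne hij
    have hzmono : StrictMono z := (hymono t htIcc).strictMono_of_injective hzinj
    have hces : ∀ i : Fin n, HasDerivAt (fun s => y s i) (v i) t := by
      intro i
      have h2 := (ContinuousLinearMap.proj (R := ℝ) (φ := fun _ : Fin n => ℝ)
        i).hasFDerivAt.comp_hasDerivAt t hyda.hasDerivAt
      exact h2
    -- the coefficients
    set A : ℕ → ℝ := fun k => (-1:ℝ)^(n-1-k) * ∑ j, (z j ^ k * deriv f (z j)) *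
        ∏ l ∈ Finset.univ.erase j, (z j - z l)⁻¹ with hA
    set σ : Fin n → ℕ → ℝ := fun i k =>
        ∑ U ∈ (Finset.univ.erase i).powersetCard (n-1-k), ∏ m ∈ U, z m with hσ
    set D : ℕ → ℝ := fun k => ∑ i, σ i k * v i with hD
    -- derivative of each E k ∘ y
    have hDk : ∀ k < n, HasDerivAt (fun s => E n k (y s)) (D k) t := by
      intro k hk
      have h0 : HasDerivAt
          (fun s => ∑ T ∈ (Finset.univ : Finset (Fin n)).powersetCard (n - k), ∏ i ∈ T, y s i)
          (∑ T ∈ (Finset.univ : Finset (Fin n)).powersetCard (n - k),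
            ∑ i ∈ T, (∏ j ∈ T.erase i, y t j) • v i) t :=
        HasDerivAt.fun_sum (fun T _ => HasDerivAt.fun_finset_prod (fun i _ => hces i))
      have hval : (∑ T ∈ (Finset.univ : Finset (Fin n)).powersetCard (n - k),
            ∑ i ∈ T, (∏ j ∈ T.erase i, y t j) • v i) = D k := by
        simp only [smul_eq_mul]
        rw [swap_powerset_sum (n - k) (by omega) z v]
        simp only [Nat.sub_right_comm n k 1]
        rfl
      rw [hval] at h0
      exact h0
    -- nonnegativity of each term
    have hterm : ∀ k ∈ Finset.range n, 0 ≤ A k * D k := by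
      intro k hkr
      have hk : k < n := Finset.mem_range.1 hkr
      by_cases hcase : E n k a < E n k b
      · -- A k ≥ 0 via the mean value theorem for divided differences
        have hHk : ContDiffOn ℝ (((n - 1 : ℕ) : ℕ∞)) (fun x => x ^ k * derivWithin f I x) I := by
          refine ContDiffOn.mul ?_ ?_
          · exact (contDiff_id.pow k).contDiffOn
          · refine hf.derivWithin hIopen.uniqueDiffOn (le_of_eq ?_)
            exact_mod_cast congrArg (Nat.cast : ℕ → ℕ∞) (show n - 1 + 1 = n from by omega)
        obtain ⟨ξ, hξI, hξ⟩ := ddiff_mvt' hIopen hIconn n (by omega)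
          (fun x => x ^ k * derivWithin f I x) hHk z hzmono hzI
        have hsign := hS k hk hcase ξ hξI
        rw [iteratedDerivWithin_eq_of_isOpen hIopen _ _ hξI] at hsign
        have hAk : 0 ≤ A k := by
          show 0 ≤ (-1:ℝ)^(n-1-k) * ∑ j, (z j ^ k * deriv f (z j)) *
            ∏ l ∈ Finset.univ.erase j, (z j - z l)⁻¹
          have hsum_eq : (∑ j, (z j ^ k * deriv f (z j)) *
              ∏ l ∈ Finset.univ.erase j, (z j - z l)⁻¹)
              = ∑ j, (fun x => x ^ k * derivWithin f I x) (z j) *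
              ∏ l ∈ Finset.univ.erase j, (z j - z l)⁻¹ := by
            refine Finset.sum_congr rfl (fun j _ => ?_)
            simp only
            rw [derivWithin_of_isOpen hIopen (hzI j)]
          rw [hsum_eq, hξ]
          set c := iteratedDeriv (n-1) (fun x => x ^ k * derivWithin f I x) ξ with hc
          have h4 : (-1:ℝ)^(n-1-k) * (-1:ℝ)^(n+k) = -1 := by
            rw [← pow_add]
            exact Odd.neg_one_pow ⟨n-1, by omega⟩
          have h5 : (-1:ℝ)^(n+k) * (-1:ℝ)^(n+k) = 1 := by
            rw [← pow_add]
            exact Even.neg_one_pow ⟨n+k, rfl⟩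
          have h6 : (-1:ℝ)^(n-1-k) = -(-1:ℝ)^(n+k) := by
            linear_combination ((-1:ℝ)^(n+k)) * h4 - ((-1:ℝ)^(n-1-k)) * h5
          rw [h6]
          have hfac : (0:ℝ) < (Nat.factorial (n-1) : ℝ) := by
            exact_mod_cast Nat.factorial_pos (n-1)
          rw [show -(-1:ℝ)^(n+k) * (c / (Nat.factorial (n-1) : ℝ))
            = -((-1:ℝ)^(n+k) * c) / (Nat.factorial (n-1) : ℝ) from by ring]
          exact div_nonneg (by linarith) hfac.le
        have hDknn : 0 ≤ D k :=
          deriv_nonneg_of_monotoneOn htI (hyE k hk) (hDk k hk)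
        exact mul_nonneg hAk hDknn
      · -- E k ∘ y is constant, so D k = 0
        have hab : E n k a = E n k b := by
          refine le_antisymm ?_ (not_lt.1 hcase)
          have h7 := hyE k hk (Set.mem_Icc.2 ⟨le_rfl, zero_le_one⟩)
            (Set.mem_Icc.2 ⟨zero_le_one, le_rfl⟩) zero_le_one
          simp only at h7
          rwa [hy0, hy1] at h7
        have hconst : ∀ u ∈ Set.Icc (0:ℝ) 1, E n k (y u) = E n k a := by
          intro u hu
          refine le_antisymm ?_ ?_
          · have h7 := hyE k hk hu (Set.mem_Icc.2 ⟨zero_le_one, le_rfl⟩) hu.2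
            simp only at h7
            rw [hy1, ← hab] at h7
            exact h7
          · have h7 := hyE k hk (Set.mem_Icc.2 ⟨le_rfl, zero_le_one⟩) hu hu.1
            simp only at h7
            rwa [hy0] at h7
        have hmono2 : MonotoneOn (fun u => -(E n k (y u))) (Set.Icc 0 1) := by
          intro u hu w hw _
          show -(E n k (y u)) ≤ -(E n k (y w))
          rw [hconst u hu, hconst w hw]
        have h1 : 0 ≤ D k := deriv_nonneg_of_monotoneOn htI (hyE k hk) (hDk k hk)
        have h2 : 0 ≤ -(D k) := deriv_nonneg_of_monotoneOn htI hmono2 (hDk k hk).neg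
        have : D k = 0 := by linarith
        rw [this, mul_zero]
    -- the derivative of the sum
    refine ⟨∑ i, deriv f (z i) * v i, ?_, ?_⟩
    · -- nonnegativity via the key identity
      have hkey : ∀ i, deriv f (z i) = ∑ k ∈ Finset.range n, A k * σ i k := by
        intro i
        exact (key_identity n (by omega) z hzinj (fun j => deriv f (z j)) i).symm
      calc (0:ℝ) ≤ ∑ k ∈ Finset.range n, A k * D k := Finset.sum_nonneg hterm
      _ = ∑ i, deriv f (z i) * v i := by
          have hstep : ∀ k ∈ Finset.range n, A k * D k = ∑ i, (A k * σ i k) * v i := by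
            intro k _
            show A k * (∑ i, σ i k * v i) = _
            rw [Finset.mul_sum]
            exact Finset.sum_congr rfl (fun i _ => by ring)
          rw [Finset.sum_congr rfl hstep, Finset.sum_comm]
          refine Finset.sum_congr rfl (fun i _ => ?_)
          rw [hkey i, Finset.sum_mul]
    · -- the derivative computation
      exact HasDerivAt.fun_sum (fun i _ =>
        HasDerivAt.comp t (hfd (z i) (hzI i)) (hces i))
  have hfinal := mono_of_deriv_nonneg_off_countable (hC1c.union hC2c) hgcont hder
  simpa [hy0, hy1] using hfinal
end

section
/- Let n ≥ 2, let I ⊆ ℝ be an open interval, let S ⊆ {0,1,…,n−1}, and let f ∈ C^n(I). Suppose that the inequality f(a_1)+…+f(a_n) ≤ f(b_1)+…+f(b_n) holds for all a, b ∈ I^n with a_1 ≤ … ≤ a_n and b_1 ≤ … ≤ b_n satisfying E_k(a) ≤ E_k(b) for all k ∈ S and E_k(a) = E_k(b) for all k ∈ {0,1,…,n−1} \ S. Then (−1)^{n+k}(x^k f'(x))^{(n−1)} ≤ 0 for all x ∈ I and all k ∈ S. -/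
open Set Finset Polynomial Filter Topology
open scoped Nat

theorem exists_mem_uIcc_sub_eq_deriv_mul {f : ℝ → ℝ} {u v : ℝ}
    (hf : DifferentiableOn ℝ f (uIcc u v)) : ∃ η ∈ uIcc u v, f v - f u = deriv f η * (v - u) := by
  wlog huv : u ≤ v generalizing u v
  · obtain ⟨η, hη, hfη⟩ := this (uIcc_comm u v ▸ hf) (le_of_not_ge huv)
    exact ⟨η, uIcc_comm u v ▸ hη, by linarith⟩
  rcases huv.eq_or_lt with rfl | huv
  · exact ⟨u, left_mem_uIcc, by simp⟩
  rw [uIcc_of_le huv.le] at hf ⊢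
  obtain ⟨η, hη, hfη⟩ := exists_deriv_eq_slope f huv hf.continuousOn
    (hf.mono Ioo_subset_Icc_self)
  exact ⟨η, Ioo_subset_Icc_self hη, by rw [hfη, div_mul_cancel₀ _ (sub_ne_zero.2 huv.ne')]⟩

theorem ContinuousAt.nonpos_of_forall_dist_lt {α : Type*} [PseudoMetricSpace α] {u : α → ℝ}
    {x : α} (hu : ContinuousAt u x) (h : ∀ δ > 0, ∃ y, dist y x < δ ∧ u y ≤ 0) : u x ≤ 0 :=
  le_of_tendsto_of_frequently hu <| Metric.nhds_basis_ball.frequently_iff.2 h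

theorem exists_iteratedDeriv_eq_zero_of_eq_zero {m : ℕ} {J : Set ℝ} (hJ : IsOpen J)
    {F : ℝ → ℝ} (hF : ContDiffOn ℝ m F J) {x : Fin (m + 1) → ℝ} (hx : StrictMono x)
    (hxJ : Icc (x 0) (x (Fin.last m)) ⊆ J) (hF₀ : ∀ i, F (x i) = 0) :
    ∃ ξ ∈ Icc (x 0) (x (Fin.last m)), iteratedDeriv m F ξ = 0 := by
  induction m generalizing F with
  | zero => exact ⟨x 0, left_mem_Icc.2 le_rfl, by simpa using hF₀ 0⟩
  | succ m ih =>
    have hsub : ∀ i : Fin (m + 1), Icc (x i.castSucc) (x i.succ) ⊆ Icc (x 0) (x (Fin.last _)) :=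
      fun i => Icc_subset_Icc (hx.monotone (Fin.zero_le _)) (hx.monotone (Fin.le_last _))
    have hrolle : ∀ i : Fin (m + 1), ∃ c ∈ Ioo (x i.castSucc) (x i.succ), deriv F c = 0 :=
      fun i => exists_deriv_eq_zero (hx Fin.castSucc_lt_succ)
        (hF.continuousOn.mono ((hsub i).trans hxJ)) ((hF₀ _).trans (hF₀ _).symm)
    choose c hc hc₀ using hrolle
    have hcmono : StrictMono c := fun i j hij =>
      ((hc i).2.trans_le (hx.monotone (Fin.succ_le_castSucc_iff.2 hij))).trans (hc j).1
    have hcx : Icc (c 0) (c (Fin.last m)) ⊆ Icc (x 0) (x (Fin.last (m + 1))) :=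
      Icc_subset_Icc (hc 0).1.le (hc (Fin.last m)).2.le
    obtain ⟨ξ, hξ, hξ₀⟩ := ih (hF.deriv_of_isOpen hJ (by norm_cast)) hcmono (hcx.trans hxJ) hc₀
    exact ⟨ξ, hcx hξ, by rwa [iteratedDeriv_succ']⟩

theorem Polynomial.iteratedDeriv_eval (p : ℝ[X]) (m : ℕ) (z : ℝ) :
    iteratedDeriv m (fun z => p.eval z) z = (derivative^[m] p).eval z := by
  induction m generalizing p with
  | zero => simp
  | succ m ih =>
    rw [iteratedDeriv_succ', Function.iterate_succ_apply, ← ih]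
    congr 1
    ext y
    exact p.deriv

theorem Polynomial.contDiff_eval (p : ℝ[X]) (m : WithTop ℕ∞) :
    ContDiff ℝ m fun z => p.eval z := by
  simpa using p.contDiff_aeval (𝕜 := ℝ) m

noncomputable def divDiff {n : ℕ} (x : Fin n → ℝ) (g : ℝ → ℝ) : ℝ :=
  ∑ i, g (x i) / ∏ j ∈ univ.erase i, (x i - x j)

theorem exists_iteratedDeriv_eq_factorial_mul_divDiff {m : ℕ} {J : Set ℝ} (hJ : IsOpen J)
    {g : ℝ → ℝ} (hg : ContDiffOn ℝ m g J) {x : Fin (m + 1) → ℝ} (hx : StrictMono x)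
    (hxJ : Icc (x 0) (x (Fin.last m)) ⊆ J) :
    ∃ ξ ∈ Icc (x 0) (x (Fin.last m)), iteratedDeriv m g ξ = m ! * divDiff x g := by
  set P := Lagrange.interpolate univ x fun i => g (x i)
  have hinj : Set.InjOn x (univ : Finset (Fin (m + 1))) := hx.injective.injOn
  have hnode : ∀ i, P.eval (x i) = g (x i) := fun i =>
    Lagrange.eval_interpolate_at_node _ hinj (mem_univ i)
  have hdeg : P.degree < #(univ : Finset (Fin (m + 1))) := Lagrange.degree_interpolate_lt _ hinj
  clear_value P
  have hP : ∀ z, iteratedDeriv m (fun z => P.eval z) z = m ! * divDiff x g := fun z => by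
    rw [P.iteratedDeriv_eval, Lagrange.eval_iterate_derivative_eq_sum hinj hdeg (by simp)]
    simp [divDiff, hnode]
  obtain ⟨ξ, hξ, hξ₀⟩ := exists_iteratedDeriv_eq_zero_of_eq_zero hJ
    (hg.sub (P.contDiff_eval m).contDiffOn) hx hxJ fun i => sub_eq_zero.2 (hnode i).symm
  refine ⟨ξ, hξ, ?_⟩
  rw [iteratedDeriv_fun_sub (hg.contDiffAt (hJ.mem_nhds (hxJ hξ)))
    (P.contDiff_eval m).contDiffAt, hP] at hξ₀
  exact sub_eq_zero.1 hξ₀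

theorem exists_strictMono_Icc_subset_ball (m : ℕ) (x : ℝ) {δ : ℝ} (hδ : 0 < δ) :
    ∃ a : Fin (m + 1) → ℝ, StrictMono a ∧ Icc (a 0) (a (Fin.last m)) ⊆ Metric.ball x δ := by
  refine ⟨fun i => x + δ / (m + 1) * i, fun i j hij => ?_, fun ξ hξ => ?_⟩
  · have : (i : ℝ) < j := by exact_mod_cast hij
    simp only
    gcongr
  · simp only [Fin.val_zero, Fin.val_last, Nat.cast_zero, mul_zero, add_zero] at hξ
    rw [Real.ball_eq_Ioo]
    have : δ / (m + 1) * m < δ := by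
      rw [div_mul_eq_mul_div, div_lt_iff₀ (by positivity)]
      linarith
    constructor <;> linarith [hξ.1, hξ.2]

theorem coeff_prod_X_sub_C_eq_E {n j : ℕ} (y : Fin n → ℝ) (hj : j ≤ n) :
    (∏ i, (X - C (y i))).coeff j = (-1) ^ (n - j) * E n j y := by
  simp_rw [sub_eq_add_neg, ← map_neg C]
  rw [Finset.prod_X_add_C_coeff _ _ (by simpa using hj), E, mul_sum]
  refine sum_congr (by simp) fun t ht => ?_
  rw [prod_neg, (mem_powersetCard.1 ht).2]

theorem prod_X_sub_C_eq_of_eval_eq_zero {R : Type*} [CommRing R] [IsDomain R] {n : ℕ}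
    {p : R[X]} (hp : p.Monic) (hdeg : p.natDegree = n) {b : Fin n → R}
    (hb : Function.Injective b) (hroot : ∀ i, p.eval (b i) = 0) :
    ∏ i, (X - C (b i)) = p := by
  have hq : (∏ i, (X - C (b i))).Monic := monic_prod_of_monic _ _ fun i _ => monic_X_sub_C _
  have hqdeg : (∏ i, (X - C (b i))).natDegree = n := by
    simp [natDegree_prod_of_monic _ _ fun i _ => monic_X_sub_C (b i)]
  refine eq_of_degree_sub_lt_of_eval_index_eq univ hb.injOn ?_ fun i _ => ?_
  · simpa [hqdeg, degree_eq_natDegree hq.ne_zero] using degree_sub_lt_left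
      (by rw [degree_eq_natDegree hq.ne_zero, degree_eq_natDegree hp.ne_zero, hqdeg, hdeg])
      hq.ne_zero (hq.leadingCoeff.trans hp.leadingCoeff.symm)
  · rw [hroot, eval_prod, prod_eq_zero (mem_univ i) (by simp)]

theorem exists_mem_Ioo_eq_zero_of_mul_neg {F : ℝ → ℝ} {u v : ℝ} (huv : u ≤ v)
    (hF : ContinuousOn F (Icc u v)) (h : F u * F v < 0) : ∃ c ∈ Ioo u v, F c = 0 := by
  rcases lt_or_gt_of_ne (left_ne_zero_of_mul h.ne) with hu | hu
  · exact intermediate_value_Ioo huv hF ⟨hu, pos_of_mul_neg_right h hu.le⟩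
  · exact intermediate_value_Ioo' huv hF ⟨neg_of_mul_neg_right h hu.le, hu⟩

theorem prod_sub_mul_prod_sub_neg {n : ℕ} {a : Fin n → ℝ} {r : ℝ} (hr : 0 < r)
    (hsep : ∀ i j, i < j → a i + 2 * r < a j) (i : Fin n) :
    (∏ j, (a i - r - a j)) * ∏ j, (a i + r - a j) < 0 := by
  rw [← prod_mul_distrib, ← mul_prod_erase _ _ (mem_univ i)]
  refine mul_neg_of_neg_of_pos (by nlinarith) (prod_pos fun j hj => ?_)
  rcases lt_or_gt_of_ne (ne_of_mem_erase hj) with hji | hij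
  · have := hsep j i hji
    exact mul_pos (by linarith) (by linarith)
  · have := hsep i j hij
    exact mul_pos_of_neg_of_neg (by linarith) (by linarith)

theorem eventually_exists_roots_near {n k : ℕ} (hk : k < n) {a : Fin n → ℝ} {r : ℝ}
    (hr : 0 < r) (hsep : ∀ i j, i < j → a i + 2 * r < a j) :
    ∀ᶠ ε in 𝓝 (0 : ℝ), ∃ b : Fin n → ℝ, (∀ i, b i ∈ Ioo (a i - r) (a i + r)) ∧
      ∏ i, (X - C (b i)) = ∏ i, (X - C (a i)) + C ε * X ^ k := by
  set p₀ : ℝ[X] := ∏ i, (X - C (a i))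
  have hp₀ : p₀.Monic := monic_prod_of_monic _ _ fun i _ => monic_X_sub_C (a i)
  have hp₀deg : p₀.natDegree = n := by
    simp [p₀, natDegree_prod_of_monic _ _ fun i _ => monic_X_sub_C (a i)]
  have hsign : ∀ᶠ ε in 𝓝 (0 : ℝ), ∀ i,
      (p₀ + C ε * X ^ k).eval (a i - r) * (p₀ + C ε * X ^ k).eval (a i + r) < 0 := by
    refine eventually_all.2 fun i => ?_
    have hcont : Continuous fun ε : ℝ =>
        (p₀ + C ε * X ^ k).eval (a i - r) * (p₀ + C ε * X ^ k).eval (a i + r) := by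
      simp only [eval_add, eval_mul, eval_C, eval_pow, eval_X]
      fun_prop
    refine hcont.continuousAt.eventually_lt continuousAt_const ?_
    simpa [p₀, eval_prod] using prod_sub_mul_prod_sub_neg hr hsep i
  filter_upwards [hsign] with ε hε
  choose b hb hb₀ using fun i =>
    exists_mem_Ioo_eq_zero_of_mul_neg (by linarith) (p₀ + C ε * X ^ k).continuousOn (hε i)
  have hbmono : StrictMono b := fun i j hij => by
    linarith [(hb i).2, (hb j).1, hsep i j hij]
  have hdeg : (C ε * X ^ k).degree < p₀.degree := by
    refine (degree_C_mul_X_pow_le k ε).trans_lt ?_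
    rw [degree_eq_natDegree hp₀.ne_zero, hp₀deg]
    exact_mod_cast hk
  exact ⟨b, hb, prod_X_sub_C_eq_of_eval_eq_zero (hp₀.add_of_left hdeg)
    (by rw [natDegree_add_eq_left_of_degree_lt hdeg, hp₀deg]) hbmono.injective hb₀⟩

noncomputable def perturbedDivDiff {n : ℕ} (k : ℕ) (f' : ℝ → ℝ) (a b η : Fin n → ℝ) : ℝ :=
  ∑ i, f' (η i) * b i ^ k / ∏ j ∈ univ.erase i, (b i - a j)

theorem perturbedDivDiff_self {n : ℕ} (k : ℕ) (f' : ℝ → ℝ) (a : Fin n → ℝ) :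
    perturbedDivDiff k f' a a a = divDiff a fun z => z ^ k * f' z := by
  simp only [perturbedDivDiff, divDiff, mul_comm (f' _)]

theorem continuousAt_perturbedDivDiff {n : ℕ} (k : ℕ) {f' : ℝ → ℝ} {a : Fin n → ℝ}
    (ha : Function.Injective a) (hf' : ∀ i, ContinuousAt f' (a i)) :
    ContinuousAt (fun p : (Fin n → ℝ) × (Fin n → ℝ) => perturbedDivDiff k f' a p.1 p.2) (a, a) := by
  refine tendsto_finsetSum _ fun i _ => ContinuousAt.div ?_ (by fun_prop) ?_
  · exact ((hf' i).comp (x := (a, a)) (f := fun p : (Fin n → ℝ) × (Fin n → ℝ) => p.2 i)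
      (by fun_prop)).mul (by fun_prop)
  · exact prod_ne_zero_iff.2 fun j hj => sub_ne_zero.2 (ha.ne (ne_of_mem_erase hj).symm)

section Perturbation

variable {n k : ℕ} {a b : Fin n → ℝ} {ε : ℝ}
  (h : ∏ i, (X - C (b i)) = ∏ i, (X - C (a i)) + C ε * X ^ k)
include h

theorem E_eq_of_prod_X_sub_C_eq_add {j : ℕ} (hjk : j ≠ k) : E n j b = E n j a := by
  rcases le_or_gt j n with hjn | hnj
  · have hcoeff := congrArg (coeff · j) h
    simpa [coeff_prod_X_sub_C_eq_E _ hjn, coeff_X_pow, hjk] using hcoeff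
  · simp [E, Nat.sub_eq_zero_of_le hnj.le]

theorem E_eq_add_of_prod_X_sub_C_eq_add (hk : k ≤ n) :
    E n k b = E n k a + (-1) ^ (n - k) * ε := by
  have hcoeff := congrArg (coeff · k) h
  simp only [coeff_add, coeff_prod_X_sub_C_eq_E _ hk, coeff_C_mul_X_pow, if_true] at hcoeff
  have hsq : ((-1 : ℝ) ^ (n - k)) ^ 2 = 1 := by rw [← pow_mul, pow_mul', neg_one_sq, one_pow]
  linear_combination (-1 : ℝ) ^ (n - k) * hcoeff - (E n k b - E n k a) * hsq

theorem prod_sub_eq_neg_mul_pow (i : Fin n) : ∏ j, (b i - a j) = -(ε * b i ^ k) := by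
  have heval := congrArg (eval (b i)) h
  simp only [eval_prod, eval_sub, eval_X, eval_C, eval_add, eval_mul, eval_pow] at heval
  rw [prod_eq_zero (mem_univ i) (sub_self _)] at heval
  linarith

theorem sum_sub_sum_eq_neg_mul_perturbedDivDiff {f f' : ℝ → ℝ} {η : Fin n → ℝ}
    (hba : ∀ i j, j ≠ i → b i ≠ a j) (hfη : ∀ i, f (b i) - f (a i) = f' (η i) * (b i - a i)) :
    ∑ i, f (b i) - ∑ i, f (a i) = -ε * perturbedDivDiff k f' a b η := by
  rw [← sum_sub_distrib, perturbedDivDiff, mul_sum]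
  refine sum_congr rfl fun i _ => ?_
  have hQ : ∏ j ∈ univ.erase i, (b i - a j) ≠ 0 :=
    prod_ne_zero_iff.2 fun j hj => sub_ne_zero.2 (hba i j (ne_of_mem_erase hj))
  have hroot := prod_sub_eq_neg_mul_pow h i
  rw [← mul_prod_erase _ _ (mem_univ i)] at hroot
  rw [hfη i]
  field_simp
  linear_combination f' (η i) * hroot

end Perturbation

theorem StrictMono.eventually_add_two_mul_lt {n : ℕ} {a : Fin n → ℝ} (ha : StrictMono a) :
    ∀ᶠ r in 𝓝 (0 : ℝ), ∀ i j, i < j → a i + 2 * r < a j := by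
  refine eventually_all.2 fun i => eventually_all.2 fun j => eventually_imp_distrib_left.2
    fun hij => (eventually_lt_nhds (half_pos (sub_pos.2 (ha hij)))).mono fun r hr => ?_
  linarith

section FirstOrderCondition

variable {n k : ℕ} {I : Set ℝ} {S : Finset ℕ} {f : ℝ → ℝ}
  (h : ∀ a b : Fin n → ℝ, (∀ i, a i ∈ I) → (∀ i, b i ∈ I) →
      Monotone a → Monotone b →
      (∀ k ∈ S, E n k a ≤ E n k b) → (∀ k < n, k ∉ S → E n k a = E n k b) →
      ∑ i, f (a i) ≤ ∑ i, f (b i))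
include h

theorem exists_perturbedDivDiff_nonpos (hk : k < n) (hkS : k ∈ S) (hf : DifferentiableOn ℝ f I)
    {a : Fin n → ℝ} (ha : StrictMono a) {r : ℝ} (hr : 0 < r)
    (hsep : ∀ i j, i < j → a i + 2 * r < a j) (hIoo : ∀ i, Ioo (a i - r) (a i + r) ⊆ I) :
    ∃ b η : Fin n → ℝ, (∀ i, b i ∈ Ioo (a i - r) (a i + r)) ∧
      (∀ i, η i ∈ Ioo (a i - r) (a i + r)) ∧
      (-1) ^ (n - k) * perturbedDivDiff k (deriv f) a b η ≤ 0 := by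
  set c : ℝ := (-1) ^ (n - k)
  have hε : ∀ᶠ ε in 𝓝 (0 : ℝ), ∃ b : Fin n → ℝ, (∀ i, b i ∈ Ioo (a i - r) (a i + r)) ∧
      ∏ i, (X - C (b i)) = ∏ i, (X - C (a i)) + C (c * ε) * X ^ k :=
    ((continuous_const_mul c).tendsto' 0 0 (mul_zero c)).eventually
      (eventually_exists_roots_near hk hr hsep)
  obtain ⟨ε, ⟨b, hb, hprod⟩, hε₀ : 0 < ε⟩ :=
    ((hε.filter_mono nhdsWithin_le_nhds).and (self_mem_nhdsWithin (s := Ioi 0))).exists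
  have hab : ∀ i, uIcc (a i) (b i) ⊆ Ioo (a i - r) (a i + r) := fun i =>
    ordConnected_Ioo.uIcc_subset ⟨by linarith, by linarith⟩ (hb i)
  choose η hη hfη using fun i => exists_mem_uIcc_sub_eq_deriv_mul (hf.mono ((hab i).trans (hIoo i)))
  refine ⟨b, η, hb, fun i => hab i (hη i), ?_⟩
  have hbmono : StrictMono b := fun i j hij => by linarith [(hb i).2, (hb j).1, hsep i j hij]
  have hE : ∀ j ∈ S, E n j a ≤ E n j b := fun j _ => by
    rcases eq_or_ne j k with rfl | hjk
    · have hcc : c * c = 1 := by rw [← pow_add, ← two_mul, pow_mul, neg_one_sq, one_pow]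
      rw [E_eq_add_of_prod_X_sub_C_eq_add hprod hk.le, ← mul_assoc, hcc]
      linarith
    · exact (E_eq_of_prod_X_sub_C_eq_add hprod hjk).ge
  have hsum := h a b (fun i => hIoo i ⟨by linarith, by linarith⟩) (fun i => hIoo i (hb i))
    ha.monotone hbmono.monotone hE
    fun j _ hj => (E_eq_of_prod_X_sub_C_eq_add hprod (ne_of_mem_of_not_mem hkS hj).symm).symm
  have hba : ∀ i j, j ≠ i → b i ≠ a j := fun i j hji => by
    rcases lt_or_gt_of_ne hji with hji | hij
    · linarith [hsep j i hji, (hb i).1]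
    · linarith [hsep i j hij, (hb i).2]
  have hdiff := sum_sub_sum_eq_neg_mul_perturbedDivDiff hprod hba hfη
  nlinarith

theorem neg_one_pow_mul_divDiff_nonpos (hI : IsOpen I) (hk : k < n) (hkS : k ∈ S)
    (hf : ContDiffOn ℝ 1 f I) {a : Fin n → ℝ} (ha : StrictMono a) (haI : ∀ i, a i ∈ I) :
    (-1) ^ (n + k) * divDiff a (fun z => z ^ k * deriv f z) ≤ 0 := by
  have hc : (-1 : ℝ) ^ (n + k) = (-1) ^ (n - k) := by
    rw [show n + k = n - k + 2 * k by omega, pow_add, pow_mul, neg_one_sq, one_pow, mul_one]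
  have hf' : ∀ i, ContinuousAt (deriv f) (a i) := fun i =>
    (hf.continuousOn_deriv_of_isOpen hI le_rfl).continuousAt (hI.mem_nhds (haI i))
  rw [hc, ← perturbedDivDiff_self]
  refine ((continuousAt_perturbedDivDiff k ha.injective hf').const_mul _
    |>.nonpos_of_forall_dist_lt) fun δ hδ => ?_
  have hr : ∀ᶠ r in 𝓝 (0 : ℝ), r < δ ∧ (∀ i j, i < j → a i + 2 * r < a j) ∧
      ∀ i, Metric.ball (a i) r ⊆ I := by
    refine (eventually_lt_nhds hδ).and (ha.eventually_add_two_mul_lt.and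
      (eventually_all.2 fun i => ?_))
    obtain ⟨ρ, hρ, hball⟩ := Metric.isOpen_iff.1 hI (a i) (haI i)
    exact (eventually_lt_nhds hρ).mono fun r hr => (Metric.ball_subset_ball hr.le).trans hball
  obtain ⟨r, ⟨hrδ, hsep, hball⟩, hr₀ : 0 < r⟩ :=
    ((hr.filter_mono nhdsWithin_le_nhds).and (self_mem_nhdsWithin (s := Ioi 0))).exists
  obtain ⟨b, η, hb, hη, hbη⟩ := exists_perturbedDivDiff_nonpos h hk hkS
    (hf.differentiableOn one_ne_zero) ha hr₀ hsep fun i => Real.ball_eq_Ioo (a i) r ▸ hball i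
  refine ⟨(b, η), ?_, hbη⟩
  rw [Prod.dist_eq, max_lt_iff, dist_pi_lt_iff hδ, dist_pi_lt_iff hδ]
  refine ⟨fun i => ?_, fun i => ?_⟩ <;> rw [Real.dist_eq, abs_sub_lt_iff]
  · constructor <;> linarith [(hb i).1, (hb i).2]
  · constructor <;> linarith [(hη i).1, (hη i).2]

end FirstOrderCondition

theorem neg_one_pow_mul_iteratedDeriv_nonpos {m k : ℕ} {I : Set ℝ} (hI : IsOpen I)
    {S : Finset ℕ} (hk : k < m + 1) (hkS : k ∈ S) {f : ℝ → ℝ} (hf : ContDiffOn ℝ (m + 1) f I)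
    (h : ∀ a b : Fin (m + 1) → ℝ, (∀ i, a i ∈ I) → (∀ i, b i ∈ I) →
      Monotone a → Monotone b →
      (∀ k ∈ S, E (m + 1) k a ≤ E (m + 1) k b) →
      (∀ k < m + 1, k ∉ S → E (m + 1) k a = E (m + 1) k b) →
      ∑ i, f (a i) ≤ ∑ i, f (b i))
    {x : ℝ} (hx : x ∈ I) :
    (-1) ^ (m + 1 + k) * iteratedDeriv m (fun z => z ^ k * deriv f z) x ≤ 0 := by
  have hg : ContDiffOn ℝ m (fun z => z ^ k * deriv f z) I :=
    (contDiffOn_id.pow k).mul (hf.deriv_of_isOpen hI le_rfl)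
  have hgI : ContinuousOn (iteratedDeriv m fun z => z ^ k * deriv f z) I :=
    (hg.continuousOn_iteratedDerivWithin le_rfl hI.uniqueDiffOn).congr
      fun z hz => (iteratedDerivWithin_of_isOpen hI hz).symm
  refine ((hgI.continuousAt (hI.mem_nhds hx)).const_mul _).nonpos_of_forall_dist_lt
    fun δ hδ => ?_
  obtain ⟨ρ, hρ, hball⟩ := Metric.isOpen_iff.1 hI x hx
  obtain ⟨a, ha, haball⟩ := exists_strictMono_Icc_subset_ball m x (lt_min hδ hρ)
  have haI : Icc (a 0) (a (Fin.last m)) ⊆ I :=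
    haball.trans ((Metric.ball_subset_ball (min_le_right _ _)).trans hball)
  obtain ⟨ξ, hξ, hξg⟩ := exists_iteratedDeriv_eq_factorial_mul_divDiff hI hg ha haI
  refine ⟨ξ, (haball hξ).trans_le (min_le_left _ _), ?_⟩
  rw [hξg, mul_left_comm]
  exact mul_nonpos_of_nonneg_of_nonpos (by positivity)
    (neg_one_pow_mul_divDiff_nonpos h hI hk hkS (hf.of_le (by norm_cast; omega)) ha
      fun i => haI ⟨ha.monotone (Fin.zero_le i), ha.monotone (Fin.le_last i)⟩)

theorem necessity_of_differential_inequality_general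
    (n : ℕ) (I : Set ℝ) (hIopen : IsOpen I)
    (S : Finset ℕ) (hS : S ⊆ Finset.range n)
    (f : ℝ → ℝ) (hf : ContDiffOn ℝ n f I)
    (h : ∀ a b : Fin n → ℝ, (∀ i, a i ∈ I) → (∀ i, b i ∈ I) →
      Monotone a → Monotone b →
      (∀ k ∈ S, E n k a ≤ E n k b) → (∀ k < n, k ∉ S → E n k a = E n k b) →
      ∑ i, f (a i) ≤ ∑ i, f (b i)) :
    ∀ x ∈ I, ∀ k ∈ S, (-1 : ℝ) ^ (n + k) *
      iteratedDerivWithin (n - 1) (fun z => z ^ k * derivWithin f I z) I x ≤ 0 := by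
  intro x hx k hkS
  have hk : k < n := mem_range.1 (hS hkS)
  obtain ⟨m, rfl⟩ : ∃ m, n = m + 1 := ⟨n - 1, by omega⟩
  rw [Nat.add_sub_cancel, iteratedDerivWithin_congr (fun z hz => by
    rw [derivWithin_of_isOpen hIopen hz]) hx, iteratedDerivWithin_of_isOpen hIopen hx]
  exact neg_one_pow_mul_iteratedDeriv_nonpos hIopen hk hkS (mod_cast hf) h hx

theorem necessity_of_differential_inequality
    (n : ℕ) (hn : 2 ≤ n) (I : Set ℝ) (hIopen : IsOpen I) (hIconn : I.OrdConnected)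
    (S : Finset ℕ) (hS : S ⊆ Finset.range n)
    (f : ℝ → ℝ) (hf : ContDiffOn ℝ n f I)
    (h : ∀ a b : Fin n → ℝ, (∀ i, a i ∈ I) → (∀ i, b i ∈ I) →
      Monotone a → Monotone b →
      (∀ k ∈ S, E n k a ≤ E n k b) → (∀ k < n, k ∉ S → E n k a = E n k b) →
      ∑ i, f (a i) ≤ ∑ i, f (b i)) :
    ∀ x ∈ I, ∀ k ∈ S, (-1 : ℝ) ^ (n + k) *
      iteratedDerivWithin (n - 1) (fun z => z ^ k * derivWithin f I z) I x ≤ 0 :=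
  necessity_of_differential_inequality_general n I hIopen S hS f hf h
end

section
/- Let n ≥ 3 be odd, let 0 < a_1 ≤ a_2 ≤ … ≤ a_n, and let A_1,…,A_{(n−1)/2} ≥ 0 with at least one A_k ≠ 0. Define the polynomial P(x) = (x+a_1)(x+a_2)⋯(x+a_n) + Σ_{k=1}^{(n−1)/2} A_k x^{2k−1}. Then P has exactly one real root in the open interval (−a_1, 0), and P has at most two real roots in the open interval (−a_n, −a_{n−1}). -/
/-!
On `(-a₁, 0)` every factor `x + aᵢ` is positive and increasing while the odd part
`S x = ∑ Aₖ x^(2k-1)` is nondecreasing, so `P` is strictly increasing there, and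
`P (-a₁) = S (-a₁) < 0 < P 0`.

On `(-aₙ, -aₙ₋₁)` the roots of `P` are zeros of `G x = ∑ log |x + aᵢ| - log |S x|`, and
`G'' = -∑ 1 / (x + aᵢ)² + (S'² - S S'') / S²`. The `n - 1` factors with `aᵢ ≤ aₙ₋₁` satisfy
`|x + aᵢ| < |x|`, so the first sum exceeds `(n - 1) / x²`; and `x² (S'² - S S'') / S²` is the mean
minus the variance of the exponents `2k - 1 ≤ n - 2`, weighted by the monomials of `S`. Hence `G` is
strictly concave and vanishes at most twice.
-/

open Set Finset

theorem encard_le_two_of_forall_not_lt_lt {s : Set ℝ}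
    (h : ∀ x ∈ s, ∀ y ∈ s, ∀ z ∈ s, x < y → y < z → False) : s.encard ≤ 2 := by
  by_contra! hs
  obtain ⟨t, hts, ht⟩ := Set.exists_subset_encard_eq ((ENat.add_one_le_iff (by decide)).2 hs)
  have hfin : t.Finite := Set.finite_of_encard_eq_coe ht
  have hcard : hfin.toFinset.card = 3 := by
    have := hfin.encard_eq_coe_toFinset_card
    rw [ht] at this
    exact_mod_cast this.symm
  let e := hfin.toFinset.orderEmbOfFin hcard
  have he : ∀ i, e i ∈ s := fun i => hts (hfin.mem_toFinset.1 (Finset.orderEmbOfFin_mem _ _ i))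
  exact h _ (he 0) _ (he 1) _ (he 2) (e.strictMono (by decide)) (e.strictMono (by decide))

theorem StrictConcaveOn.encard_setOf_eq_le_two {s : Set ℝ} {f : ℝ → ℝ}
    (hf : StrictConcaveOn ℝ s f) (c : ℝ) : {x ∈ s | f x = c}.encard ≤ 2 := by
  refine encard_le_two_of_forall_not_lt_lt fun x ⟨hx, hfx⟩ y ⟨_, hfy⟩ z ⟨hz, hfz⟩ hxy hyz => ?_
  have := hf.lt_on_openSegment hx hz (hxy.trans hyz).ne
    (by rw [openSegment_eq_Ioo (hxy.trans hyz)]; exact ⟨hxy, hyz⟩)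
  simp [hfx, hfy, hfz] at this

theorem existsUnique_mem_Ioo_eq_zero {f : ℝ → ℝ} {l r : ℝ} (hlr : l ≤ r)
    (hf : ContinuousOn f (Icc l r)) (hmono : StrictMonoOn f (Ioo l r)) (hl : f l < 0)
    (hr : 0 < f r) : ∃! x, x ∈ Ioo l r ∧ f x = 0 := by
  obtain ⟨x, hx, hfx⟩ := intermediate_value_Ioo hlr hf ⟨hl, hr⟩
  exact ⟨x, ⟨hx, hfx⟩, fun y ⟨hy, hfy⟩ => hmono.injOn hy hx (hfy.trans hfx.symm)⟩

theorem strictConcaveOn_of_hasDerivAt2_neg {D : Set ℝ} (hD : Convex ℝ D) (hDo : IsOpen D)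
    {f f' f'' : ℝ → ℝ} (hf : ∀ x ∈ D, HasDerivAt f (f' x) x)
    (hf' : ∀ x ∈ D, HasDerivAt f' (f'' x) x) (hf'' : ∀ x ∈ D, f'' x < 0) :
    StrictConcaveOn ℝ D f := by
  have hanti : StrictAntiOn f' D := strictAntiOn_of_hasDerivWithinAt_neg hD
    (fun x hx => (hf' x hx).continuousAt.continuousWithinAt)
    (by rw [hDo.interior_eq]; exact fun x hx => (hf' x hx).hasDerivWithinAt)
    (by rwa [hDo.interior_eq])
  refine StrictAntiOn.strictConcaveOn_of_deriv hD
    (fun x hx => (hf x hx).continuousAt.continuousWithinAt) ?_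
  rw [hDo.interior_eq]
  exact hanti.congr fun x hx => (hf x hx).deriv.symm

-- With weights `F`, this says that mean minus variance of `e` is at most `d`.
theorem sq_sum_mul_sub_le {ι : Type*} (s : Finset ι) (e F : ι → ℝ) {d : ℝ}
    (hF : ∀ i ∈ s, 0 ≤ F i) (he : ∀ i ∈ s, e i ≤ d) :
    (∑ i ∈ s, e i * F i) ^ 2 - (∑ i ∈ s, e i * (e i - 1) * F i) * ∑ i ∈ s, F i
      ≤ d * (∑ i ∈ s, F i) ^ 2 := by
  have hCS : (∑ i ∈ s, e i * F i) ^ 2 ≤ (∑ i ∈ s, e i ^ 2 * F i) * ∑ i ∈ s, F i :=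
    sum_sq_le_sum_mul_sum_of_sq_le_mul s (fun i hi => by have := hF i hi; positivity) hF
      fun i _ => le_of_eq (by ring)
  have hmean : ∑ i ∈ s, e i * F i ≤ d * ∑ i ∈ s, F i := by
    rw [Finset.mul_sum]
    exact Finset.sum_le_sum fun i hi => mul_le_mul_of_nonneg_right (he i hi) (hF i hi)
  have hsplit : ∑ i ∈ s, e i * (e i - 1) * F i = ∑ i ∈ s, e i ^ 2 * F i - ∑ i ∈ s, e i * F i := by
    rw [← Finset.sum_sub_distrib]
    exact Finset.sum_congr rfl fun i _ => by ring
  rw [hsplit]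
  nlinarith [Finset.sum_nonneg hF]

def monomialSum {ι : Type*} (s : Finset ι) (c : ι → ℝ) (e : ι → ℕ) (x : ℝ) : ℝ :=
  ∑ i ∈ s, c i * x ^ e i

namespace monomialSum

variable {ι : Type*} (s : Finset ι) (c : ι → ℝ) (e : ι → ℕ)

theorem hasDerivAt (x : ℝ) :
    HasDerivAt (monomialSum s c e) (monomialSum s (fun i => c i * e i) (fun i => e i - 1) x) x := by
  show HasDerivAt (fun y => ∑ i ∈ s, c i * y ^ e i) _ x
  simpa only [monomialSum, mul_assoc] using
    HasDerivAt.fun_sum (u := s) fun i _ => (hasDerivAt_pow (e i) x).const_mul (c i)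

theorem mul_deriv (x : ℝ) :
    x * monomialSum s (fun i => c i * e i) (fun i => e i - 1) x
      = ∑ i ∈ s, (e i : ℝ) * (c i * x ^ e i) := by
  rw [monomialSum, Finset.mul_sum]
  refine Finset.sum_congr rfl fun i _ => ?_
  rcases Nat.eq_zero_or_pos (e i) with h | h
  · simp [h]
  · rw [← mul_pow_sub_one h.ne' x]; ring

theorem sq_mul_deriv2 (x : ℝ) :
    x ^ 2 * monomialSum s (fun i => c i * e i * (e i - 1 : ℕ)) (fun i => e i - 1 - 1) x
      = ∑ i ∈ s, (e i : ℝ) * (e i - 1) * (c i * x ^ e i) := by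
  have h := mul_deriv s (fun i => c i * e i) (fun i => e i - 1) x
  rw [sq, mul_assoc, h, Finset.mul_sum]
  refine Finset.sum_congr rfl fun i _ => ?_
  rcases Nat.eq_zero_or_pos (e i) with h | h
  · simp [h]
  · rw [Nat.cast_sub h, ← mul_pow_sub_one h.ne' x]; push_cast; ring

theorem sq_mul_deriv_sq_sub_le {x d : ℝ} (hsign : ∀ i ∈ s, c i * x ^ e i ≤ 0)
    (he : ∀ i ∈ s, (e i : ℝ) ≤ d) :
    x ^ 2 * (monomialSum s (fun i => c i * e i) (fun i => e i - 1) x ^ 2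
      - monomialSum s c e x
        * monomialSum s (fun i => c i * e i * (e i - 1 : ℕ)) (fun i => e i - 1 - 1) x)
      ≤ d * monomialSum s c e x ^ 2 := by
  have key := sq_sum_mul_sub_le s (fun i => (e i : ℝ)) (fun i => -(c i * x ^ e i))
    (fun i hi => neg_nonneg.2 (hsign i hi)) he
  have h1 := mul_deriv s c e x
  have h2 := sq_mul_deriv2 s c e x
  simp only [mul_neg, Finset.sum_neg_distrib, neg_sq] at key
  calc _ = (x * monomialSum s (fun i => c i * e i) (fun i => e i - 1) x) ^ 2
        - (x ^ 2 * monomialSum s (fun i => c i * e i * (e i - 1 : ℕ)) (fun i => e i - 1 - 1) x)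
          * monomialSum s c e x := by ring
    _ ≤ _ := by rw [h1, h2, monomialSum]; linarith

variable {s c e}

theorem continuous : Continuous (monomialSum s c e) :=
  continuous_iff_continuousAt.2 fun x => (hasDerivAt s c e x).continuousAt

theorem monotone (hc : ∀ i ∈ s, 0 ≤ c i) (he : ∀ i ∈ s, Odd (e i)) :
    Monotone (monomialSum s c e) := fun _ _ hxy =>
  Finset.sum_le_sum fun i hi =>
    mul_le_mul_of_nonneg_left ((he i hi).strictMono_pow.monotone hxy) (hc i hi)

theorem term_nonpos_of_neg (hc : ∀ i ∈ s, 0 ≤ c i) (he : ∀ i ∈ s, Odd (e i)) {x : ℝ}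
    (hx : x < 0) : ∀ i ∈ s, c i * x ^ e i ≤ 0 := fun i hi =>
  mul_nonpos_of_nonneg_of_nonpos (hc i hi) ((he i hi).pow_neg hx).le

theorem neg_of_neg (hc : ∀ i ∈ s, 0 ≤ c i) (he : ∀ i ∈ s, Odd (e i)) (hne : ∃ i ∈ s, c i ≠ 0)
    {x : ℝ} (hx : x < 0) : monomialSum s c e x < 0 := by
  obtain ⟨i, hi, hci⟩ := hne
  exact Finset.sum_neg' (term_nonpos_of_neg hc he hx)
    ⟨i, hi, mul_neg_of_pos_of_neg ((hc i hi).lt_of_ne' hci) ((he i hi).pow_neg hx)⟩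

theorem apply_zero (he : ∀ i ∈ s, Odd (e i)) : monomialSum s c e 0 = 0 :=
  Finset.sum_eq_zero fun i hi => by simp [zero_pow (he i hi).pos.ne']

end monomialSum

section ProdAddEqZero

variable {ι : Type*} [Fintype ι] (a : ι → ℝ)

theorem strictMonoOn_prod_add [Nonempty ι] {t : ℝ} (ht : ∀ i, t ≤ a i) :
    StrictMonoOn (fun x => ∏ i, (x + a i)) (Ioi (-t)) := fun x hx y _ hxy =>
  Finset.prod_lt_prod_of_nonempty (fun i _ => by linarith [ht i, mem_Ioi.1 hx])
    (fun i _ => by linarith) Finset.univ_nonempty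

theorem existsUnique_prod_add_eq_zero {i₀ : ι} (hpos : ∀ i, 0 < a i) (hmin : ∀ i, a i₀ ≤ a i)
    {S : ℝ → ℝ} (hS : Continuous S) (hSmono : Monotone S) (hS0 : S 0 = 0)
    (hSneg : S (-a i₀) < 0) : ∃! x, x ∈ Ioo (-a i₀) 0 ∧ ∏ i, (x + a i) + S x = 0 := by
  have : Nonempty ι := ⟨i₀⟩
  refine existsUnique_mem_Ioo_eq_zero (neg_nonpos.2 (hpos i₀).le) (by fun_prop) ?_ ?_ ?_
  · exact fun x hx y hy hxy => add_lt_add_of_lt_of_le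
      (strictMonoOn_prod_add a hmin hx.1 hy.1 hxy) (hSmono hxy.le)
  · rwa [Finset.prod_eq_zero (Finset.mem_univ i₀) (neg_add_cancel _), zero_add]
  · simpa [hS0] using Finset.prod_pos fun i _ => hpos i

theorem card_div_sq_le_sum_inv_sq (t : Finset ι) {x : ℝ} (ht : ∀ i ∈ t, 0 < a i ∧ x + a i < 0) :
    (#t : ℝ) / x ^ 2 ≤ ∑ i, ((x + a i) ^ 2)⁻¹ :=
  calc (#t : ℝ) / x ^ 2 = ∑ _i ∈ t, (x ^ 2)⁻¹ := by simp [div_eq_mul_inv]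
    _ ≤ ∑ i ∈ t, ((x + a i) ^ 2)⁻¹ := Finset.sum_le_sum fun i hi => by
        obtain ⟨hai, hxa⟩ := ht i hi
        exact inv_anti₀ (sq_pos_of_neg hxa) (by nlinarith)
    _ ≤ ∑ i, ((x + a i) ^ 2)⁻¹ := Finset.sum_le_univ_sum_of_nonneg fun i => by positivity

-- `Real.log` ignores signs, so no case split on the sign of the product is needed.
theorem sum_log_sub_log_eq_zero {S x : ℝ} (hS : S ≠ 0) (h : ∏ i, (x + a i) + S = 0) :
    ∑ i, Real.log (x + a i) - Real.log S = 0 := by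
  have hprod : ∏ i, (x + a i) = -S := by linarith
  have hfac : ∀ i ∈ Finset.univ, x + a i ≠ 0 :=
    Finset.prod_ne_zero_iff.1 (hprod ▸ neg_ne_zero.2 hS)
  rw [← Real.log_prod hfac, hprod, Real.log_neg_eq_log, sub_self]

theorem hasDerivAt_sum_log_sub_log {S : ℝ → ℝ} {S' x : ℝ} (hS : HasDerivAt S S' x)
    (hSx : S x ≠ 0) (hx : ∀ i, x + a i ≠ 0) :
    HasDerivAt (fun y => ∑ i, Real.log (y + a i) - Real.log (S y))
      (∑ i, (x + a i)⁻¹ - S' / S x) x := by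
  have hlog : ∀ i ∈ Finset.univ, HasDerivAt (fun y => Real.log (y + a i)) (x + a i)⁻¹ x :=
    fun i _ => by simpa using ((hasDerivAt_id x).add_const (a i)).log (hx i)
  exact (HasDerivAt.fun_sum hlog).sub (hS.log hSx)

theorem hasDerivAt_sum_inv_sub_div {S S' : ℝ → ℝ} {S'' x : ℝ} (hS : HasDerivAt S (S' x) x)
    (hS' : HasDerivAt S' S'' x) (hSx : S x ≠ 0) (hx : ∀ i, x + a i ≠ 0) :
    HasDerivAt (fun y => ∑ i, (y + a i)⁻¹ - S' y / S y)
      (-∑ i, ((x + a i) ^ 2)⁻¹ - (S'' * S x - S' x * S' x) / S x ^ 2) x := by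
  have hinv : ∀ i ∈ Finset.univ, HasDerivAt (fun y => (y + a i)⁻¹) (-((x + a i) ^ 2)⁻¹) x :=
    fun i _ => by simpa [neg_div, one_div] using ((hasDerivAt_id x).add_const (a i)).fun_inv (hx i)
  simpa only [Finset.sum_neg_distrib] using (HasDerivAt.fun_sum hinv).fun_sub (hS'.fun_div hS hSx)

theorem encard_setOf_prod_add_eq_zero_le_two {D : Set ℝ} (hD : Convex ℝ D) (hDo : IsOpen D)
    {S S' S'' : ℝ → ℝ} (hS : ∀ x ∈ D, HasDerivAt S (S' x) x)
    (hS' : ∀ x ∈ D, HasDerivAt S' (S'' x) x) (hSx : ∀ x ∈ D, S x ≠ 0)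
    (hx : ∀ x ∈ D, ∀ i, x + a i ≠ 0)
    (hcurv : ∀ x ∈ D, (S' x ^ 2 - S x * S'' x) / S x ^ 2 < ∑ i, ((x + a i) ^ 2)⁻¹) :
    {x ∈ D | ∏ i, (x + a i) + S x = 0}.encard ≤ 2 := by
  have hconc := strictConcaveOn_of_hasDerivAt2_neg hD hDo
    (fun x hx' => hasDerivAt_sum_log_sub_log a (hS x hx') (hSx x hx') (hx x hx'))
    (fun x hx' => hasDerivAt_sum_inv_sub_div a (hS x hx') (hS' x hx') (hSx x hx') (hx x hx'))
    (fun x hx' => by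
      have := hcurv x hx'
      have : (S'' x * S x - S' x * S' x) / S x ^ 2 = -((S' x ^ 2 - S x * S'' x) / S x ^ 2) := by
        ring
      linarith)
  refine (Set.encard_le_encard ?_).trans (hconc.encard_setOf_eq_le_two 0)
  exact fun x ⟨hxD, h⟩ => ⟨hxD, sum_log_sub_log_eq_zero a (hSx x hxD) h⟩

theorem encard_setOf_prod_add_monomialSum_eq_zero_le_two (hpos : ∀ i, 0 < a i) {i₁ i₂ : ι}
    (hle : ∀ i ≠ i₁, a i ≤ a i₂) {κ : Type*} {s : Finset κ} {c : κ → ℝ} {e : κ → ℕ}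
    (hc : ∀ k ∈ s, 0 ≤ c k) (he : ∀ k ∈ s, Odd (e k)) (hne : ∃ k ∈ s, c k ≠ 0)
    (hdeg : ∀ k ∈ s, e k + 2 ≤ Fintype.card ι) :
    {x ∈ Ioo (-a i₁) (-a i₂) | ∏ i, (x + a i) + monomialSum s c e x = 0}.encard ≤ 2 := by
  classical
  have hneg : ∀ x ∈ Ioo (-a i₁) (-a i₂), ∀ i ≠ i₁, x + a i < 0 :=
    fun x hx i hi => by linarith [hle i hi, hx.2]
  have hx0 : ∀ x ∈ Ioo (-a i₁) (-a i₂), x < 0 := fun x hx => hx.2.trans (neg_neg_of_pos (hpos _))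
  refine encard_setOf_prod_add_eq_zero_le_two a (convex_Ioo _ _) isOpen_Ioo
    (fun x _ => monomialSum.hasDerivAt s c e x) (fun x _ => monomialSum.hasDerivAt _ _ _ x)
    (fun x hx => (monomialSum.neg_of_neg hc he hne (hx0 x hx)).ne) ?_ ?_
  · intro x hx i
    by_cases hi : i = i₁
    · subst hi; linarith [hx.1]
    · exact (hneg x hx i hi).ne
  · intro x hx
    have hx2 : 0 < x ^ 2 := sq_pos_of_neg (hx0 x hx)
    have hS2 : 0 < monomialSum s c e x ^ 2 :=
      sq_pos_of_neg (monomialSum.neg_of_neg hc he hne (hx0 x hx))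
    have key := monomialSum.sq_mul_deriv_sq_sub_le s c e
      (monomialSum.term_nonpos_of_neg hc he (hx0 x hx)) (d := (Fintype.card ι : ℝ) - 2)
      (fun k hk => by
        have : (e k : ℝ) + 2 ≤ Fintype.card ι := by exact_mod_cast hdeg k hk
        linarith)
    calc _ ≤ ((Fintype.card ι : ℝ) - 2) / x ^ 2 := by
          rw [div_le_div_iff₀ hS2 hx2]; linarith
      _ < ((Fintype.card ι : ℝ) - 1) / x ^ 2 := by gcongr; norm_num
      _ = #(Finset.univ.erase i₁) / x ^ 2 := by
          rw [Finset.card_erase_of_mem (Finset.mem_univ _), Finset.card_univ,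
            Nat.cast_pred (Fintype.card_pos_iff.2 ⟨i₁⟩)]
      _ ≤ _ := card_div_sq_le_sum_inv_sq a _
          fun i hi => ⟨hpos i, hneg x hx i (Finset.ne_of_mem_erase hi)⟩

end ProdAddEqZero

theorem lemma1_odd_P_roots
    (n : ℕ) (hn : 3 ≤ n)
    (a : Fin n → ℝ) (hpos : ∀ i, 0 < a i) (hmono : Monotone a)
    (A : ℕ → ℝ) (hA : ∀ k ∈ Finset.Icc 1 ((n - 1) / 2), 0 ≤ A k)
    (hA' : ∃ k ∈ Finset.Icc 1 ((n - 1) / 2), A k ≠ 0)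
    (P : ℝ → ℝ)
    (hP : ∀ x, P x = (∏ i, (x + a i)) +
      ∑ k ∈ Finset.Icc 1 ((n - 1) / 2), A k * x ^ (2 * k - 1)) :
    (∃! x, x ∈ Set.Ioo (-(a ⟨0, by omega⟩)) 0 ∧ P x = 0) ∧
    Set.encard {x ∈ Set.Ioo (-(a ⟨n - 1, by omega⟩)) (-(a ⟨n - 2, by omega⟩)) |
      P x = 0} ≤ 2 := by
  obtain rfl : P = fun x => ∏ i, (x + a i) + monomialSum (Finset.Icc 1 ((n - 1) / 2)) A
      (fun k => 2 * k - 1) x := funext hP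
  have hodd_exp : ∀ k ∈ Finset.Icc 1 ((n - 1) / 2), Odd (2 * k - 1) :=
    fun k hk => ⟨k - 1, by have := (Finset.mem_Icc.1 hk).1; omega⟩
  refine ⟨existsUnique_prod_add_eq_zero a hpos (fun i => hmono (Nat.zero_le i.val))
    monomialSum.continuous (monomialSum.monotone hA hodd_exp) (monomialSum.apply_zero hodd_exp)
    (monomialSum.neg_of_neg hA hodd_exp hA' (neg_neg_of_pos (hpos _))), ?_⟩
  refine encard_setOf_prod_add_monomialSum_eq_zero_le_two a hpos (fun i hi => hmono ?_)
    hA hodd_exp hA' fun k hk => ?_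
  · have : i.val ≠ n - 1 := fun h => hi (Fin.ext h)
    show i.val ≤ n - 2
    omega
  · have := (Finset.mem_Icc.1 hk).2
    rw [Fintype.card_fin]
    omega
end

section
/- Let n ≥ 2 be even, let 0 < a_1 ≤ a_2 ≤ … ≤ a_n, and let A_1,…,A_{n/2} ≥ 0 with at least one A_k ≠ 0. Define the polynomial P(x) = (x+a_1)(x+a_2)⋯(x+a_n) + Σ_{k=1}^{n/2} A_k x^{2k−1}. Then P has exactly one real root in the open interval (−∞, −a_n) and exactly one real root in the open interval (−a_1, 0). -/
/-!
On `[-a₁, 0]` each factor `x + aᵢ` is nonnegative and nondecreasing and each odd power is strictly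
increasing, so `P` is strictly increasing there; `P(-a₁) < 0` because the product vanishes and the
odd powers are negative, while `P(0) = ∏ aᵢ > 0`. For `x < -aₙ` put `x = 1/y`: then
`yⁿ P(1/y) = ∏ (1 + aᵢ y) + ∑ A_k y^(n+1-2k)` has the same shape on `[-1/aₙ, 0]`, because
`n + 1 - 2k` is odd when `n` is even.
-/

open Set

theorem existsUnique_zero_Ioo_of_strictMonoOn {f : ℝ → ℝ} {a b : ℝ} (hab : a ≤ b)
    (hf : ContinuousOn f (Icc a b)) (hmono : StrictMonoOn f (Icc a b))
    (ha : f a < 0) (hb : 0 < f b) : ∃! x, x ∈ Ioo a b ∧ f x = 0 := by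
  obtain ⟨x, hx, hfx⟩ := intermediate_value_Ioo hab hf ⟨ha, hb⟩
  refine ⟨x, ⟨hx, hfx⟩, fun y ⟨hy, hfy⟩ => ?_⟩
  exact hmono.injOn (Ioo_subset_Icc_self hy) (Ioo_subset_Icc_self hx) (hfy.trans hfx.symm)

theorem strictMono_sum_mul_odd_pow {κ : Type*} (t : Finset κ) (B : κ → ℝ) (e : κ → ℕ)
    (hB : ∀ k ∈ t, 0 ≤ B k) (hB' : ∃ k ∈ t, 0 < B k) (he : ∀ k ∈ t, Odd (e k)) :
    StrictMono fun y : ℝ => ∑ k ∈ t, B k * y ^ e k := by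
  intro x y hxy
  obtain ⟨k, hk, hBk⟩ := hB'
  exact Finset.sum_lt_sum
    (fun j hj => mul_le_mul_of_nonneg_left ((he j hj).strictMono_pow.monotone hxy.le) (hB j hj))
    ⟨k, hk, mul_lt_mul_of_pos_left ((he k hk).strictMono_pow hxy) hBk⟩

/-- The sum vanishes at `0` and is strictly increasing, so it pushes `g` below zero at `L`
without changing the sign of `g 0`. -/
theorem existsUnique_root_Ioo_add_sum_mul_odd_pow {κ : Type*} {g : ℝ → ℝ} {L : ℝ} (hL : L < 0)
    (hg : ContinuousOn g (Icc L 0)) (hmono : MonotoneOn g (Icc L 0))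
    (hgL : g L ≤ 0) (hg0 : 0 < g 0)
    (t : Finset κ) (B : κ → ℝ) (e : κ → ℕ)
    (hB : ∀ k ∈ t, 0 ≤ B k) (hB' : ∃ k ∈ t, 0 < B k) (he : ∀ k ∈ t, Odd (e k)) :
    ∃! y, y ∈ Ioo L 0 ∧ g y + ∑ k ∈ t, B k * y ^ e k = 0 := by
  have hsum := strictMono_sum_mul_odd_pow t B e hB hB' he
  have hsum0 : ∑ k ∈ t, B k * (0 : ℝ) ^ e k = 0 :=
    Finset.sum_eq_zero fun k hk => by rw [zero_pow (he k hk).pos.ne', mul_zero]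
  refine existsUnique_zero_Ioo_of_strictMonoOn hL.le (by fun_prop)
    (fun x hx y hy hxy => add_lt_add_of_le_of_lt (hmono hx hy hxy.le) (hsum hxy)) ?_ ?_
  · linarith [hsum hL]
  · linarith

section PolynomialWithNegativeRoots

variable {ι κ : Type*} [Fintype ι] (a : ι → ℝ) (t : Finset κ) (B : κ → ℝ) (e : κ → ℕ)

theorem existsUnique_root_prod_add_sum_mem_Ioo (hpos : ∀ i, 0 < a i) (i₀ : ι)
    (hmin : ∀ i, a i₀ ≤ a i) (hB : ∀ k ∈ t, 0 ≤ B k) (hB' : ∃ k ∈ t, 0 < B k)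
    (he : ∀ k ∈ t, Odd (e k)) :
    ∃! x, x ∈ Ioo (-a i₀) 0 ∧ ∏ i, (x + a i) + ∑ k ∈ t, B k * x ^ e k = 0 := by
  refine existsUnique_root_Ioo_add_sum_mul_odd_pow (neg_lt_zero.2 (hpos i₀)) (by fun_prop)
    ?_ ?_ ?_ t B e hB hB' he
  · refine MonotoneOn.finsetProd (fun i _ => (monotone_id.add_const _).monotoneOn _) ?_
    exact fun i _ x hx => by linarith [hmin i, hx.1]
  · exact (Finset.prod_eq_zero (Finset.mem_univ i₀) (neg_add_cancel _)).le
  · simpa using Finset.prod_pos fun i _ => hpos i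

theorem prod_inv_add_add_sum_mul_inv_pow (he : ∀ k ∈ t, e k ≤ Fintype.card ι) {y : ℝ}
    (hy : y ≠ 0) :
    ∏ i, (y⁻¹ + a i) + ∑ k ∈ t, B k * y⁻¹ ^ e k =
      y⁻¹ ^ Fintype.card ι * (∏ i, (1 + a i * y) + ∑ k ∈ t, B k * y ^ (Fintype.card ι - e k)) := by
  have hprod : ∏ i, (y⁻¹ + a i) = y⁻¹ ^ Fintype.card ι * ∏ i, (1 + a i * y) := by
    rw [← Finset.card_univ, ← Finset.prod_const, ← Finset.prod_mul_distrib]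
    exact Finset.prod_congr rfl fun i _ => by field_simp
  have hpow : ∀ k ∈ t, y⁻¹ ^ e k = y⁻¹ ^ Fintype.card ι * y ^ (Fintype.card ι - e k) :=
    fun k hk => by
      rw [← Nat.add_sub_cancel' (he k hk), pow_add, Nat.add_sub_cancel_left, mul_assoc,
        ← mul_pow, inv_mul_cancel₀ hy, one_pow, mul_one]
  rw [hprod, mul_add, Finset.mul_sum]
  congr 1
  exact Finset.sum_congr rfl fun k hk => by rw [hpow k hk]; ring

theorem inv_lt_neg_iff {b y : ℝ} (hb : 0 < b) : y⁻¹ < -b ↔ y ∈ Ioo (-b⁻¹) 0 := by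
  have key : ∀ y < 0, (y⁻¹ < -b ↔ -b⁻¹ < y) := fun y hy => by
    rw [inv_lt_of_neg hy (neg_neg_of_pos hb), inv_neg]
  constructor
  · intro h
    have hy : y < 0 := inv_lt_zero.1 (h.trans (neg_neg_of_pos hb))
    exact ⟨(key y hy).1 h, hy⟩
  · rintro ⟨h, hy⟩
    exact (key y hy).2 h

/-- Via `x = y⁻¹` this is the root of the reversed polynomial in `(-(a i₁)⁻¹, 0)`. -/
theorem existsUnique_root_prod_add_sum_mem_Iio (hpos : ∀ i, 0 < a i) (i₁ : ι)
    (hmax : ∀ i, a i ≤ a i₁) (hB : ∀ k ∈ t, 0 ≤ B k) (hB' : ∃ k ∈ t, 0 < B k)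
    (hle : ∀ k ∈ t, e k ≤ Fintype.card ι) (hodd : ∀ k ∈ t, Odd (Fintype.card ι - e k)) :
    ∃! x, x ∈ Iio (-a i₁) ∧ ∏ i, (x + a i) + ∑ k ∈ t, B k * x ^ e k = 0 := by
  have hb := hpos i₁
  have hrev := existsUnique_root_Ioo_add_sum_mul_odd_pow (g := fun y => ∏ i, (1 + a i * y))
    (neg_lt_zero.2 (inv_pos.2 hb)) (by fun_prop) ?_ ?_ (by simp) t B _ hB hB' hodd
  · refine ((Equiv.inv ℝ).existsUnique_congr' fun y => ?_).2 hrev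
    simp only [Equiv.inv_symm, Equiv.inv_apply, mem_Iio]
    rw [inv_lt_neg_iff hb]
    refine and_congr_right fun hy => ?_
    rw [prod_inv_add_add_sum_mul_inv_pow a t B e hle hy.2.ne, mul_eq_zero,
      or_iff_right (pow_ne_zero _ (inv_ne_zero hy.2.ne))]
  · refine MonotoneOn.finsetProd
      (fun i _ => ((monotone_id.const_mul (hpos i).le).const_add 1).monotoneOn _) ?_
    intro i _ y hy
    have : -1 ≤ a i * y := calc
      -1 ≤ a i * -(a i₁)⁻¹ := by
        rw [mul_neg, neg_le_neg_iff, ← div_eq_mul_inv]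
        exact (div_le_one hb).2 (hmax i)
      _ ≤ a i * y := mul_le_mul_of_nonneg_left hy.1 (hpos i).le
    linarith
  · refine (Finset.prod_eq_zero (Finset.mem_univ i₁) ?_).le
    rw [mul_neg, mul_inv_cancel₀ hb.ne', add_neg_cancel]

end PolynomialWithNegativeRoots

theorem lemma2_even_P_roots
    (n : ℕ) (hn : 2 ≤ n) (heven : Even n)
    (a : Fin n → ℝ) (hpos : ∀ i, 0 < a i) (hmono : Monotone a)
    (A : ℕ → ℝ) (hA : ∀ k ∈ Finset.Icc 1 (n / 2), 0 ≤ A k)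
    (hA' : ∃ k ∈ Finset.Icc 1 (n / 2), A k ≠ 0)
    (P : ℝ → ℝ)
    (hP : ∀ x, P x = (∏ i, (x + a i)) +
      ∑ k ∈ Finset.Icc 1 (n / 2), A k * x ^ (2 * k - 1)) :
    (∃! x, x ∈ Set.Iio (-(a ⟨n - 1, by omega⟩)) ∧ P x = 0) ∧
    (∃! x, x ∈ Set.Ioo (-(a ⟨0, by omega⟩)) 0 ∧ P x = 0) := by
  obtain rfl : P = _ := funext hP
  have hApos : ∃ k ∈ Finset.Icc 1 (n / 2), 0 < A k := by
    obtain ⟨k, hk, hAk⟩ := hA'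
    exact ⟨k, hk, (hA k hk).lt_of_ne' hAk⟩
  obtain ⟨m, rfl⟩ := heven
  have hexp : ∀ k ∈ Finset.Icc 1 ((m + m) / 2), 2 * k - 1 ≤ m + m ∧ Odd (2 * k - 1) ∧
      Odd (m + m - (2 * k - 1)) := fun k hk => by
    rw [Finset.mem_Icc] at hk
    exact ⟨by omega, ⟨k - 1, by omega⟩, ⟨m - k, by omega⟩⟩
  refine ⟨existsUnique_root_prod_add_sum_mem_Iio a _ A _ hpos _ (fun i => hmono ?_) hA hApos
      (fun k hk => by simpa using (hexp k hk).1) (fun k hk => by simpa using (hexp k hk).2.2),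
    existsUnique_root_prod_add_sum_mem_Ioo a _ A _ hpos _ (fun i => hmono ?_) hA hApos
      (fun k hk => (hexp k hk).2.1)⟩
  · exact Fin.mk_le_mk.2 (by omega)
  · exact Fin.mk_le_mk.2 (by omega)
end

section
/- Let n ≥ 2 be an integer and let k ∈ {1, 2, …, n−1}. For the function f(x) = (log x)^2 on (0,∞), whose derivative is f'(x) = 2·log(x)/x, one has (−1)^{n+k}·(x^k f'(x))^{(n−1)} ≤ 0 for all x > 0; that is, (−1)^{n+k} times the (n−1)-st derivative of the map x ↦ 2·x^{k−1}·log x is ≤ 0 on (0, ∞). -/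
open Real Set
open scoped Nat

/-! `p` derivatives turn `x ^ p * log x` into `p! * log x + b` on `(0, ∞)`, one more into `p! / x`,
and the `i`-th derivative of `1 / x` is `(-1) ^ i * i! * x ^ (-1 - i)`. For `p = k - 1` and
`i = n - 1 - k` the total sign `(-1) ^ (n + k) * (-1) ^ (n - 1 - k)` is `-1`. -/

theorem iteratedDeriv_pow_mul_log_eqOn (p : ℕ) {m : ℕ} (hm : m ≤ p) :
    ∃ b : ℝ, EqOn (iteratedDeriv m fun y => y ^ p * log y)
      (fun x => p.descFactorial m * x ^ (p - m) * log x + b * x ^ (p - m)) (Ioi 0) := by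
  induction m with
  | zero => exact ⟨0, fun x _ => by simp⟩
  | succ m ih =>
    obtain ⟨b, hb⟩ := ih (by omega)
    obtain ⟨q, hq⟩ : ∃ q, p - m = q + 1 := ⟨p - m - 1, by omega⟩
    refine ⟨p.descFactorial m + b * (q + 1), fun x (hx : 0 < x) => ?_⟩
    have hderiv : HasDerivAt (fun x => p.descFactorial m * x ^ (q + 1) * log x + b * x ^ (q + 1))
        (p.descFactorial m * ((q + 1 : ℕ) * x ^ q) * log x + p.descFactorial m * x ^ (q + 1) * x⁻¹
          + b * ((q + 1 : ℕ) * x ^ q)) x :=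
      (((hasDerivAt_pow (q + 1) x).const_mul _).mul (hasDerivAt_log hx.ne')).add
        ((hasDerivAt_pow (q + 1) x).const_mul b)
    rw [iteratedDeriv_succ, (hb.eventuallyEq_of_mem (Ioi_mem_nhds hx)).deriv_eq, hq,
      hderiv.deriv, Nat.descFactorial_succ, show p - (m + 1) = q by omega, hq]
    field_simp
    push_cast
    ring

theorem iteratedDeriv_succ_pow_mul_log_eqOn (p : ℕ) :
    EqOn (iteratedDeriv (p + 1) fun y => y ^ p * log y) (fun x => p ! * x⁻¹) (Ioi 0) := by
  obtain ⟨b, hb⟩ := iteratedDeriv_pow_mul_log_eqOn p le_rfl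
  intro x (hx : 0 < x)
  have hderiv : HasDerivAt (fun x => p ! * log x + b) (p ! * x⁻¹) x :=
    ((hasDerivAt_log hx.ne').const_mul _).add_const b
  rw [iteratedDeriv_succ, (hb.eventuallyEq_of_mem (Ioi_mem_nhds hx)).deriv_eq]
  simpa only [Nat.descFactorial_self, Nat.sub_self, pow_zero, mul_one] using hderiv.deriv

theorem iteratedDeriv_add_succ_pow_mul_log_eqOn (p i : ℕ) :
    EqOn (iteratedDeriv (i + (p + 1)) fun y => y ^ p * log y)
      (fun x => p ! * ((-1) ^ i * i ! * x ^ (-1 - i : ℤ))) (Ioi 0) := by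
  intro x hx
  rw [iteratedDeriv_eq_iterate, Function.iterate_add_apply, ← iteratedDeriv_eq_iterate,
    ← iteratedDeriv_eq_iterate,
    (iteratedDeriv_succ_pow_mul_log_eqOn p).iteratedDeriv_of_isOpen isOpen_Ioi i hx,
    iteratedDeriv_const_mul_field, iteratedDeriv_eq_iterate, iter_deriv_inv]

theorem log_sq_differential_inequality_general
    (n k : ℕ) (hk : k ∈ Finset.Icc 1 (n - 1)) :
    ∀ x : ℝ, 0 < x →
      (-1 : ℝ) ^ (n + k) *
        iteratedDeriv (n - 1) (fun y : ℝ => 2 * y ^ (k - 1) * Real.log y) x ≤ 0 := by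
  intro x hx
  obtain ⟨hk1, hkn⟩ := Finset.mem_Icc.mp hk
  have hsplit : n - 1 = (n - 1 - k) + (k - 1 + 1) := by omega
  have hsign : (-1 : ℝ) ^ (n + k) * (-1) ^ (n - 1 - k) = -1 := by
    rw [← pow_add]
    exact Odd.neg_one_pow ⟨n - 1, by omega⟩
  simp only [mul_assoc, iteratedDeriv_const_mul_field]
  rw [hsplit, iteratedDeriv_add_succ_pow_mul_log_eqOn (k - 1) (n - 1 - k) hx]
  calc _ = -(2 * (k - 1)! * (n - 1 - k)! * x ^ (-1 - (n - 1 - k : ℕ) : ℤ)) := by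
        linear_combination (2 * (k - 1)! * (n - 1 - k)! * x ^ (-1 - (n - 1 - k : ℕ) : ℤ)) * hsign
    _ ≤ 0 := neg_nonpos.mpr (by positivity)

theorem log_sq_differential_inequality
    (n k : ℕ) (hn : 2 ≤ n) (hk : k ∈ Finset.Icc 1 (n - 1)) :
    ∀ x : ℝ, 0 < x →
      (-1 : ℝ) ^ (n + k) *
        iteratedDeriv (n - 1) (fun y : ℝ => 2 * y ^ (k - 1) * Real.log y) x ≤ 0 :=
  log_sq_differential_inequality_general n k hk
end

section
/- Let n ≥ 2 be an integer, let p ∈ (−1,0), and let k ∈ {1, 2, …, n−1}. For the function f(x) = x^p on (0,∞), one has (−1)^{n+k}·(x^k f'(x))^{(n−1)} ≤ 0 for all x > 0; explicitly, (−1)^{n+k}·p·(k+p−1)(k+p−2)⋯(k+p−(n−1))·x^{k+p−n} ≤ 0 for all x > 0. -/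
/-!
On `(0, ∞)` the function `x ^ k * f' x` is `p * x ^ (k + p - 1)`, whose `(n - 1)`-st derivative is
`p * (k + p - 1) ⋯ (k + p - (n - 1)) * x ^ (k + p - n)`. The factors `k + p - j` with `j < k` are
positive since `p > -1` and the `n - k` factors with `j ≥ k` are negative since `p < 0`, so the
product has sign `(-1) ^ (n - k)` and the whole expression the sign `-(-1) ^ (n + k)`.
-/

open Finset

lemma descPochhammer_eval_sub_one (r : ℝ) (m : ℕ) :
    (descPochhammer ℝ m).eval (r - 1) = ∏ j ∈ Icc 1 m, (r - j) := by
  rw [descPochhammer_eval_eq_prod_range, range_eq_Ico, ← Ico_add_one_right_eq_Icc,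
    ← prod_Ico_add' _ 0 m 1]
  refine prod_congr rfl fun j _ => ?_
  push_cast
  ring

lemma neg_one_pow_card_mul_prod_nonneg {ι : Type*} (s : Finset ι) (f : ι → ℝ)
    (hf : ∀ i ∈ s, f i ≤ 0) : 0 ≤ (-1) ^ #s * ∏ i ∈ s, f i := by
  rw [← prod_neg]
  exact prod_nonneg fun i hi => neg_nonneg.mpr (hf i hi)

lemma neg_one_pow_mul_prod_Ico_sub_nonneg {p : ℝ} (hp : p ∈ Set.Ioc (-1) 0) {k n : ℕ}
    (hk : 1 ≤ k) (hkn : k ≤ n) :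
    0 ≤ (-1) ^ (n + k) * ∏ j ∈ Ico 1 n, ((k : ℝ) + p - j) := by
  have hsign : (-1 : ℝ) ^ (n + k) = (-1) ^ #(Ico k n) := by
    rw [Nat.card_Ico, show n + k = n - k + 2 * k by omega, pow_add, pow_mul]
    norm_num
  rw [← prod_Ico_consecutive _ hk hkn, hsign, mul_left_comm]
  refine mul_nonneg (prod_nonneg fun j hj => ?_)
    (neg_one_pow_card_mul_prod_nonneg _ _ fun j hj => ?_)
  · have : (j : ℝ) + 1 ≤ k := by exact_mod_cast (mem_Ico.mp hj).2
    linarith [hp.1]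
  · have : (k : ℝ) ≤ j := by exact_mod_cast (mem_Ico.mp hj).1
    linarith [hp.2]

lemma iteratedDeriv_pow_mul_deriv_rpow (m k : ℕ) (p : ℝ) {x : ℝ} (hx : 0 < x) :
    iteratedDeriv m (fun y : ℝ => y ^ k * deriv (fun z : ℝ => z ^ p) y) x =
      p * (∏ j ∈ Icc 1 m, ((k : ℝ) + p - j)) * x ^ ((k : ℝ) + p - 1 - m) := by
  have hloc : (fun y : ℝ => y ^ k * deriv (fun z : ℝ => z ^ p) y) =ᶠ[nhds x]
      fun y => p * y ^ ((k : ℝ) + p - 1) := by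
    filter_upwards [eventually_gt_nhds hx] with y hy
    rw [Real.deriv_rpow_const, ← Real.rpow_natCast, mul_left_comm, ← Real.rpow_add hy]
    ring_nf
  rw [hloc.iteratedDeriv_eq, iteratedDeriv_const_mul_field, iteratedDeriv_eq_iterate,
    Real.iter_deriv_rpow_const, descPochhammer_eval_sub_one, mul_assoc]

theorem rpow_differential_inequality_neg_exponent_general
    (n : ℕ) (p : ℝ) (hp : p ∈ Set.Ioo (-1 : ℝ) 0)
    (k : ℕ) (hk : k ∈ Finset.Icc 1 (n - 1)) :
    ∀ x : ℝ, 0 < x →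
      (-1 : ℝ) ^ (n + k) *
        iteratedDeriv (n - 1)
          (fun y : ℝ => y ^ k * deriv (fun z : ℝ => z ^ p) y) x ≤ 0 ∧
      (-1 : ℝ) ^ (n + k) * p *
        (∏ j ∈ Finset.Icc 1 (n - 1), ((k : ℝ) + p - (j : ℝ))) *
        x ^ ((k : ℝ) + p - (n : ℝ)) ≤ 0 := by
  intro x hx
  obtain ⟨hk1, hkn⟩ := mem_Icc.mp hk
  have hexp : (k : ℝ) + p - 1 - ((n - 1 : ℕ) : ℝ) = k + p - n := by
    rw [Nat.cast_sub (by omega), Nat.cast_one]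
    ring
  have hprod : 0 ≤ (-1) ^ (n + k) * ∏ j ∈ Icc 1 (n - 1), ((k : ℝ) + p - j) := by
    rw [show Icc 1 (n - 1) = Ico 1 n by ext; simp only [mem_Icc, mem_Ico]; omega]
    exact neg_one_pow_mul_prod_Ico_sub_nonneg (Set.Ioo_subset_Ioc_self hp) hk1 (by omega)
  have hsign : (-1 : ℝ) ^ (n + k) * p * (∏ j ∈ Icc 1 (n - 1), ((k : ℝ) + p - j)) *
      x ^ ((k : ℝ) + p - n) ≤ 0 := by
    have := mul_nonpos_of_nonpos_of_nonneg (mul_nonpos_of_nonpos_of_nonneg hp.2.le hprod)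
      (Real.rpow_pos_of_pos hx ((k : ℝ) + p - n)).le
    linarith
  rw [iteratedDeriv_pow_mul_deriv_rpow _ _ _ hx, hexp, ← mul_assoc, ← mul_assoc]
  exact ⟨hsign, hsign⟩

theorem rpow_differential_inequality_neg_exponent
    (n : ℕ) (hn : 2 ≤ n) (p : ℝ) (hp : p ∈ Set.Ioo (-1 : ℝ) 0)
    (k : ℕ) (hk : k ∈ Finset.Icc 1 (n - 1)) :
    ∀ x : ℝ, 0 < x →
      (-1 : ℝ) ^ (n + k) *
        iteratedDeriv (n - 1)
          (fun y : ℝ => y ^ k * deriv (fun z : ℝ => z ^ p) y) x ≤ 0 ∧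
      (-1 : ℝ) ^ (n + k) * p *
        (∏ j ∈ Finset.Icc 1 (n - 1), ((k : ℝ) + p - (j : ℝ))) *
        x ^ ((k : ℝ) + p - (n : ℝ)) ≤ 0 :=
  rpow_differential_inequality_neg_exponent_general n p hp k hk
end

section
/- Let a_1, a_2, a_3, b_1, b_2, b_3 > 0 satisfy a_1+a_2+a_3 ≤ b_1+b_2+b_3, a_1a_2+a_1a_3+a_2a_3 ≤ b_1b_2+b_1b_3+b_2b_3, and a_1a_2a_3 = b_1b_2b_3. Then (log a_1)^2+(log a_2)^2+(log a_3)^2 ≤ (log b_1)^2+(log b_2)^2+(log b_3)^2. -/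
/-!
For `x > 0` one has the integral representation
`(log x)² = ∫₀^∞ (log (x + t) + log (x⁻¹ + t) - 2 log (1 + t)) / t dt`:
both sides vanish at `x = 1`, and differentiating under the integral sign gives
`2 log x / x`. Summed over `a₁, a₂, a₃`, the integrand is
`(log ∏ (aᵢ + t) + log ∏ (aᵢ⁻¹ + t) - 6 log (1 + t)) / t`, monotone in both products.
Now `∏ (aᵢ + t) = t³ + e₁ t² + e₂ t + e₃`, and when `e₃(a) = e₃(b)` the hypotheses pass to
the inverses, since `e₁(a⁻¹) = e₂(a) / e₃(a)` and `e₂(a⁻¹) = e₁(a) / e₃(a)`. So the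
integrand for `a` is pointwise at most the one for `b`.
-/

open MeasureTheory Real Set Filter Topology

noncomputable def logSqKernel (x t : ℝ) : ℝ :=
  (log (x + t) + log (x⁻¹ + t) - 2 * log (1 + t)) / t

noncomputable def logSqKernelDeriv (x t : ℝ) : ℝ :=
  (x ^ 2 - 1) / (x * (x + t) * (1 + x * t))

lemma measurable_logSqKernel (x : ℝ) : Measurable (logSqKernel x) := by
  unfold logSqKernel; fun_prop

lemma measurable_logSqKernelDeriv (x : ℝ) : Measurable (logSqKernelDeriv x) := by
  unfold logSqKernelDeriv; fun_prop

lemma logSqKernel_one (t : ℝ) : logSqKernel 1 t = 0 := by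
  simp only [logSqKernel, inv_one]; ring

lemma add_inv_sub_two_nonneg {x : ℝ} (hx : 0 < x) : 0 ≤ x + x⁻¹ - 2 := by
  have : x + x⁻¹ - 2 = (x - 1) ^ 2 / x := by field_simp; ring
  rw [this]; positivity

lemma mul_add_inv_add_eq {x : ℝ} (hx : x ≠ 0) (t : ℝ) :
    (x + t) * (x⁻¹ + t) = (1 + t) ^ 2 + (x + x⁻¹ - 2) * t := by
  field_simp; ring

lemma logSqKernel_eq_log_one_add {x t : ℝ} (hx : 0 < x) (ht : 0 ≤ t) :
    logSqKernel x t = log (1 + (x + x⁻¹ - 2) * t / (1 + t) ^ 2) / t := by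
  have hsplit : 1 + (x + x⁻¹ - 2) * t / (1 + t) ^ 2 = (x + t) * (x⁻¹ + t) / (1 + t) ^ 2 := by
    rw [mul_add_inv_add_eq hx.ne', add_div, div_self (by positivity)]
  rw [hsplit, log_div (by positivity) (by positivity), log_mul (by positivity) (by positivity),
    log_pow, logSqKernel]
  push_cast; ring

lemma logSqKernel_nonneg {x t : ℝ} (hx : 0 < x) (ht : 0 ≤ t) : 0 ≤ logSqKernel x t := by
  rw [logSqKernel_eq_log_one_add hx ht]
  have hc := add_inv_sub_two_nonneg hx
  exact div_nonneg (log_nonneg (by simp only [le_add_iff_nonneg_right]; positivity)) ht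

lemma logSqKernel_le {x t : ℝ} (hx : 0 < x) (ht : 0 < t) :
    logSqKernel x t ≤ (x + x⁻¹ - 2) * (1 + t ^ 2)⁻¹ := by
  have hc := add_inv_sub_two_nonneg hx
  rw [logSqKernel_eq_log_one_add hx ht.le]
  calc log (1 + (x + x⁻¹ - 2) * t / (1 + t) ^ 2) / t
      ≤ (x + x⁻¹ - 2) * t / (1 + t) ^ 2 / t := by
        gcongr
        exact (log_le_sub_one_of_pos (by positivity)).trans_eq (by ring)
    _ ≤ (x + x⁻¹ - 2) / (1 + t ^ 2) := by
        rw [mul_div_right_comm, mul_div_cancel_right₀ _ ht.ne']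
        gcongr; nlinarith
    _ = (x + x⁻¹ - 2) * (1 + t ^ 2)⁻¹ := div_eq_mul_inv _ _

lemma integrableOn_logSqKernel {x : ℝ} (hx : 0 < x) : IntegrableOn (logSqKernel x) (Ioi 0) := by
  refine Integrable.mono' ((integrable_inv_one_add_sq.const_mul (x + x⁻¹ - 2)).restrict)
    (measurable_logSqKernel x).aestronglyMeasurable ?_
  filter_upwards [ae_restrict_mem measurableSet_Ioi] with t (ht : 0 < t)
  rw [norm_of_nonneg (logSqKernel_nonneg hx ht.le)]
  exact logSqKernel_le hx ht

lemma norm_logSqKernelDeriv_le {m M y t : ℝ} (hm : 0 < m) (hmy : m ≤ y) (hyM : y ≤ M)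
    (ht : 0 ≤ t) :
    ‖logSqKernelDeriv y t‖ ≤ (M ^ 2 + 1) / m ^ 2 * (1 + t ^ 2)⁻¹ := by
  have hy : 0 < y := hm.trans_le hmy
  have hden : m ^ 2 * (1 + t ^ 2) ≤ y * (y + t) * (1 + y * t) :=
    calc m ^ 2 * (1 + t ^ 2) ≤ m * ((m + t) * (1 + m * t)) := by nlinarith [mul_nonneg hm.le ht]
      _ ≤ y * ((y + t) * (1 + y * t)) := by gcongr
      _ = y * (y + t) * (1 + y * t) := by ring
  rw [logSqKernelDeriv, norm_div, norm_of_nonneg (by positivity : 0 ≤ y * (y + t) * (1 + y * t)),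
    ← div_eq_mul_inv, div_div]
  gcongr
  rw [Real.norm_eq_abs, abs_le]
  constructor <;> nlinarith

lemma integrableOn_logSqKernelDeriv {x : ℝ} (hx : 0 < x) :
    IntegrableOn (logSqKernelDeriv x) (Ioi 0) := by
  refine Integrable.mono' ((integrable_inv_one_add_sq.const_mul ((x ^ 2 + 1) / x ^ 2)).restrict)
    (measurable_logSqKernelDeriv x).aestronglyMeasurable ?_
  filter_upwards [ae_restrict_mem measurableSet_Ioi] with t (ht : 0 < t)
  exact norm_logSqKernelDeriv_le hx le_rfl le_rfl ht.le

lemma hasDerivAt_logSqKernel {y t : ℝ} (hy : 0 < y) (ht : 0 < t) :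
    HasDerivAt (logSqKernel · t) (logSqKernelDeriv y t) y := by
  have hlog₁ : HasDerivAt (fun z => log (z + t)) (1 / (y + t)) y := by
    simpa using ((hasDerivAt_id y).add_const t).log (by positivity)
  have hlog₂ : HasDerivAt (fun z => log (z⁻¹ + t)) (-(y ^ 2)⁻¹ / (y⁻¹ + t)) y :=
    ((hasDerivAt_inv hy.ne').add_const t).log (by positivity)
  refine (((hlog₁.add hlog₂).sub_const (2 * log (1 + t))).div_const t).congr_deriv ?_
  simp only [logSqKernelDeriv]
  field_simp
  ring

lemma integral_logSqKernelDeriv {x : ℝ} (hx : 0 < x) :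
    ∫ t in Ioi 0, logSqKernelDeriv x t = 2 * log x / x := by
  have hderiv : ∀ t ∈ Ici (0 : ℝ), HasDerivAt (fun t => (log (1 + x * t) - log (x + t)) / x)
      (logSqKernelDeriv x t) t := by
    intro t (ht : 0 ≤ t)
    have hlog₁ : HasDerivAt (fun t => log (1 + x * t)) (x / (1 + x * t)) t := by
      simpa using (((hasDerivAt_id t).const_mul x).const_add 1).log (by positivity)
    have hlog₂ : HasDerivAt (fun t => log (x + t)) (1 / (x + t)) t := by
      simpa using ((hasDerivAt_id t).const_add x).log (by positivity)
    refine ((hlog₁.sub hlog₂).div_const x).congr_deriv ?_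
    simp only [logSqKernelDeriv]
    field_simp
    ring
  have hratio : Tendsto (fun t => (1 + x * t) / (x + t)) atTop (𝓝 x) := by
    have : Tendsto (fun t => x + (1 - x ^ 2) / (x + t)) atTop (𝓝 (x + 0)) :=
      tendsto_const_nhds.add
        (tendsto_const_nhds.div_atTop (tendsto_atTop_add_const_left _ x tendsto_id))
    rw [add_zero] at this
    refine this.congr' ?_
    filter_upwards [eventually_gt_atTop 0] with t ht
    field_simp
    ring
  have hlim : Tendsto (fun t => (log (1 + x * t) - log (x + t)) / x) atTop (𝓝 (log x / x)) := by
    refine ((((continuousAt_log hx.ne').tendsto).comp hratio).div_const x).congr' ?_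
    filter_upwards [eventually_gt_atTop 0] with t ht
    rw [Function.comp_apply, log_div (by positivity) (by positivity)]
  rw [integral_Ioi_of_hasDerivAt_of_tendsto' hderiv (integrableOn_logSqKernelDeriv hx) hlim]
  simp only [mul_zero, add_zero, log_one]
  ring

lemma hasDerivAt_integral_logSqKernel {x : ℝ} (hx : 0 < x) :
    HasDerivAt (fun y => ∫ t in Ioi 0, logSqKernel y t) (2 * log x / x) x := by
  have hball : ∀ y ∈ Metric.ball x (x / 2), x / 2 ≤ y ∧ y ≤ 2 * x := by
    intro y hy
    rw [Metric.mem_ball, dist_eq, abs_lt] at hy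
    constructor <;> linarith
  rw [← integral_logSqKernelDeriv hx]
  refine (hasDerivAt_integral_of_dominated_loc_of_deriv_le (Metric.ball_mem_nhds x (half_pos hx))
    (Eventually.of_forall fun y => (measurable_logSqKernel y).aestronglyMeasurable)
    (integrableOn_logSqKernel hx) (measurable_logSqKernelDeriv x).aestronglyMeasurable ?_
    ((integrable_inv_one_add_sq.const_mul (((2 * x) ^ 2 + 1) / (x / 2) ^ 2)).restrict) ?_).2
  · filter_upwards [ae_restrict_mem measurableSet_Ioi] with t (ht : 0 < t) y hy
    exact norm_logSqKernelDeriv_le (half_pos hx) (hball y hy).1 (hball y hy).2 ht.le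
  · filter_upwards [ae_restrict_mem measurableSet_Ioi] with t (ht : 0 < t) y hy
    exact hasDerivAt_logSqKernel ((half_pos hx).trans_le (hball y hy).1) ht

lemma integral_logSqKernel {x : ℝ} (hx : 0 < x) :
    ∫ t in Ioi 0, logSqKernel x t = log x ^ 2 := by
  have hlogsq : ∀ y ∈ Ioi (0 : ℝ), HasDerivAt (fun y => log y ^ 2) (2 * log y / y) y := by
    intro y (hy : 0 < y)
    refine ((hasDerivAt_log hy.ne').pow 2).congr_deriv ?_
    field_simp
    ring
  refine isOpen_Ioi.eqOn_of_deriv_eq isPreconnected_Ioi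
    (fun y hy => (hasDerivAt_integral_logSqKernel hy).differentiableAt.differentiableWithinAt)
    (fun y hy => (hlogsq y hy).differentiableAt.differentiableWithinAt)
    (fun y hy => (hasDerivAt_integral_logSqKernel hy).deriv.trans (hlogsq y hy).deriv.symm)
    (mem_Ioi.2 one_pos) ?_ hx
  simp [logSqKernel_one]

lemma sum_logSqKernel_eq {ι : Type*} (s : Finset ι) {a : ι → ℝ} (ha : ∀ i ∈ s, 0 < a i)
    {t : ℝ} (ht : 0 ≤ t) :
    ∑ i ∈ s, logSqKernel (a i) t =
      (log (∏ i ∈ s, (a i + t)) + log (∏ i ∈ s, ((a i)⁻¹ + t)) - 2 * s.card * log (1 + t)) /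
        t := by
  have hpos : ∀ i ∈ s, 0 < a i + t := fun i hi => by linarith [ha i hi]
  have hinv_pos : ∀ i ∈ s, 0 < (a i)⁻¹ + t := fun i hi => by have := ha i hi; positivity
  rw [log_prod (fun i hi => (hpos i hi).ne'), log_prod (fun i hi => (hinv_pos i hi).ne')]
  simp only [logSqKernel, ← Finset.sum_div, Finset.sum_sub_distrib, Finset.sum_add_distrib,
    Finset.sum_const, nsmul_eq_mul]
  ring

lemma sum_logSqKernel_le {ι : Type*} (s : Finset ι) {a b : ι → ℝ} (ha : ∀ i ∈ s, 0 < a i)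
    (hb : ∀ i ∈ s, 0 < b i) {t : ℝ} (ht : 0 < t)
    (hprod : ∏ i ∈ s, (a i + t) ≤ ∏ i ∈ s, (b i + t))
    (hprod_inv : ∏ i ∈ s, ((a i)⁻¹ + t) ≤ ∏ i ∈ s, ((b i)⁻¹ + t)) :
    ∑ i ∈ s, logSqKernel (a i) t ≤ ∑ i ∈ s, logSqKernel (b i) t := by
  have hpos : 0 < ∏ i ∈ s, (a i + t) :=
    Finset.prod_pos fun i hi => by linarith [ha i hi]
  have hinv_pos : 0 < ∏ i ∈ s, ((a i)⁻¹ + t) :=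
    Finset.prod_pos fun i hi => by have := ha i hi; positivity
  rw [sum_logSqKernel_eq s ha ht.le, sum_logSqKernel_eq s hb ht.le]
  gcongr

theorem sum_log_sq_le_of_prod_add_le {ι : Type*} (s : Finset ι) {a b : ι → ℝ}
    (ha : ∀ i ∈ s, 0 < a i) (hb : ∀ i ∈ s, 0 < b i)
    (hprod : ∀ t > 0, ∏ i ∈ s, (a i + t) ≤ ∏ i ∈ s, (b i + t))
    (hprod_inv : ∀ t > 0, ∏ i ∈ s, ((a i)⁻¹ + t) ≤ ∏ i ∈ s, ((b i)⁻¹ + t)) :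
    ∑ i ∈ s, log (a i) ^ 2 ≤ ∑ i ∈ s, log (b i) ^ 2 := by
  rw [Finset.sum_congr rfl fun i hi => (integral_logSqKernel (ha i hi)).symm,
    Finset.sum_congr rfl fun i hi => (integral_logSqKernel (hb i hi)).symm,
    ← integral_finsetSum s fun i hi => integrableOn_logSqKernel (ha i hi),
    ← integral_finsetSum s fun i hi => integrableOn_logSqKernel (hb i hi)]
  refine setIntegral_mono_on
    (integrable_finsetSum s fun i hi => integrableOn_logSqKernel (ha i hi))
    (integrable_finsetSum s fun i hi => integrableOn_logSqKernel (hb i hi)) measurableSet_Ioi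
    fun t (ht : 0 < t) => ?_
  exact sum_logSqKernel_le s ha hb ht (hprod t ht) (hprod_inv t ht)

lemma prod_three_add_le {a₁ a₂ a₃ b₁ b₂ b₃ t : ℝ} (ht : 0 ≤ t)
    (h1 : a₁ + a₂ + a₃ ≤ b₁ + b₂ + b₃)
    (h2 : a₁ * a₂ + a₁ * a₃ + a₂ * a₃ ≤ b₁ * b₂ + b₁ * b₃ + b₂ * b₃)
    (h3 : a₁ * a₂ * a₃ ≤ b₁ * b₂ * b₃) :
    (a₁ + t) * (a₂ + t) * (a₃ + t) ≤ (b₁ + t) * (b₂ + t) * (b₃ + t) := by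
  nlinarith [mul_le_mul_of_nonneg_right h1 (sq_nonneg t), mul_le_mul_of_nonneg_right h2 ht]

lemma prod_three_inv_add_le {a₁ a₂ a₃ b₁ b₂ b₃ t : ℝ}
    (ha₁ : 0 < a₁) (ha₂ : 0 < a₂) (ha₃ : 0 < a₃)
    (hb₁ : 0 < b₁) (hb₂ : 0 < b₂) (hb₃ : 0 < b₃) (ht : 0 ≤ t)
    (h1 : a₁ + a₂ + a₃ ≤ b₁ + b₂ + b₃)
    (h2 : a₁ * a₂ + a₁ * a₃ + a₂ * a₃ ≤ b₁ * b₂ + b₁ * b₃ + b₂ * b₃)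
    (h3 : a₁ * a₂ * a₃ = b₁ * b₂ * b₃) :
    (a₁⁻¹ + t) * (a₂⁻¹ + t) * (a₃⁻¹ + t) ≤ (b₁⁻¹ + t) * (b₂⁻¹ + t) * (b₃⁻¹ + t) := by
  have hsum_inv {x y z : ℝ} (hx : 0 < x) (hy : 0 < y) (hz : 0 < z) :
      x⁻¹ + y⁻¹ + z⁻¹ = (x * y + x * z + y * z) / (x * y * z) := by
    field_simp; ring
  have hpair_inv {x y z : ℝ} (hx : 0 < x) (hy : 0 < y) (hz : 0 < z) :
      x⁻¹ * y⁻¹ + x⁻¹ * z⁻¹ + y⁻¹ * z⁻¹ = (x + y + z) / (x * y * z) := by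
    field_simp; ring
  have he3 : 0 < a₁ * a₂ * a₃ := by positivity
  apply prod_three_add_le ht
  · rw [hsum_inv ha₁ ha₂ ha₃, hsum_inv hb₁ hb₂ hb₃, ← h3]; gcongr
  · rw [hpair_inv ha₁ ha₂ ha₃, hpair_inv hb₁ hb₂ hb₃, ← h3]; gcongr
  · rw [← mul_inv, ← mul_inv, ← mul_inv, ← mul_inv, h3]

theorem sum_of_squared_logarithms_three
    (a₁ a₂ a₃ b₁ b₂ b₃ : ℝ)
    (ha₁ : 0 < a₁) (ha₂ : 0 < a₂) (ha₃ : 0 < a₃)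
    (hb₁ : 0 < b₁) (hb₂ : 0 < b₂) (hb₃ : 0 < b₃)
    (h1 : a₁ + a₂ + a₃ ≤ b₁ + b₂ + b₃)
    (h2 : a₁ * a₂ + a₁ * a₃ + a₂ * a₃ ≤ b₁ * b₂ + b₁ * b₃ + b₂ * b₃)
    (h3 : a₁ * a₂ * a₃ = b₁ * b₂ * b₃) :
    (Real.log a₁) ^ 2 + (Real.log a₂) ^ 2 + (Real.log a₃) ^ 2 ≤
      (Real.log b₁) ^ 2 + (Real.log b₂) ^ 2 + (Real.log b₃) ^ 2 := by
  have key := sum_log_sq_le_of_prod_add_le Finset.univ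
    (a := ![a₁, a₂, a₃]) (b := ![b₁, b₂, b₃])
    (by simp [Fin.forall_fin_succ, ha₁, ha₂, ha₃])
    (by simp [Fin.forall_fin_succ, hb₁, hb₂, hb₃])
    (fun t ht => by
      simpa [Fin.prod_univ_three] using prod_three_add_le ht.le h1 h2 h3.le)
    (fun t ht => by
      simpa [Fin.prod_univ_three] using
        prod_three_inv_add_le ha₁ ha₂ ha₃ hb₁ hb₂ hb₃ ht.le h1 h2 h3)
  simpa [Fin.sum_univ_three] using key
end

section
/- Let n ≥ 2 and set a = (1/n, 1/n, …, 1/n) ∈ (0,∞)^n and b = (1, 1, …, 1) ∈ (0,∞)^n. Then E_k(a) ≤ E_k(b) for every k ∈ {0, 1, …, n−1} (in particular a_1⋯a_n ≤ b_1⋯b_n), yet (log a_1)^2 + … + (log a_n)^2 = n·(log n)^2 > 0 = (log b_1)^2 + … + (log b_n)^2. In particular, the sum of squared logarithms inequality fails if the equality constraint on the product is weakened to an inequality. -/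
theorem E_mono {n k : ℕ} {y z : Fin n → ℝ} (hy : 0 ≤ y) (hyz : y ≤ z) : E n k y ≤ E n k z :=
  Finset.sum_le_sum fun _ _ =>
    Finset.prod_le_prod (fun i _ => hy i) (fun i _ => hyz i)

theorem log_sq_inequality_fails_for_weaker_constraint (n : ℕ) (hn : 2 ≤ n) :
    (∀ k < n, E n k (fun _ : Fin n => (1 : ℝ) / n) ≤ E n k (fun _ : Fin n => (1 : ℝ))) ∧
    (∑ _i : Fin n, (Real.log ((1 : ℝ) / n)) ^ 2 = (n : ℝ) * (Real.log n) ^ 2) ∧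
    (0 : ℝ) < (n : ℝ) * (Real.log n) ^ 2 ∧
    (∑ _i : Fin n, (Real.log (1 : ℝ)) ^ 2 = 0) := by
  have hn1 : (1 : ℝ) < n := by exact_mod_cast hn
  have h_inv_le_one : (1 : ℝ) / n ≤ 1 := (div_le_one (by positivity)).2 hn1.le
  refine ⟨fun k _ => E_mono (fun _ => by positivity) (fun _ => h_inv_le_one), ?_, ?_, by simp⟩
  · simp [Real.log_inv]
  · have := Real.log_pos hn1
    positivity
end

section
/- Let n ≥ 2, let J ⊆ ℝ be an open interval, let k ∈ {0,1,…,n−1}, and let f ∈ C^n(J) satisfy (−1)^{n+k}(x^k f'(x))^{(n−1)} > 0 for all x ∈ J. Then for any pairwise distinct points y_1, y_2, …, y_n ∈ J one has Σ_{i=1}^n f'(y_i)·(−y_i)^k / ∏_{j≠i}(y_j − y_i) < 0. -/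
/-! The sum in the claim is `-(-1) ^ (n + k)` times the divided difference
`∑ i, g (y i) / ∏ j ≠ i, (y i - y j)` of `g z = z ^ k * f' z` at the nodes `y`. Subtracting from `g`
its Lagrange interpolant leaves a function with `n` zeros in `J`, so by iterated Rolle some `ξ ∈ J`
has `g⁽ⁿ⁻¹⁾ ξ` equal to the `(n - 1)`-st derivative of the interpolant, which is `(n - 1)!` times
that divided difference. The hypothesis gives `g⁽ⁿ⁻¹⁾ ξ` the sign `(-1) ^ (n + k)`. -/

open Polynomial Finset
open scoped Nat

theorem iteratedDeriv_polynomial_eval {𝕜 : Type*} [NontriviallyNormedField 𝕜] (p : 𝕜[X])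
    (m : ℕ) (x : 𝕜) : iteratedDeriv m (fun x => p.eval x) x = (derivative^[m] p).eval x := by
  induction m generalizing p with
  | zero => rfl
  | succ m ih =>
    rw [iteratedDeriv_succ', funext fun x => p.deriv (x := x), ih, Function.iterate_succ_apply]

section

variable {J : Set ℝ}

theorem exists_iteratedDeriv_eq_zero_of_strictMono (hJo : IsOpen J) (hJc : J.OrdConnected)
    {m : ℕ} {h : ℝ → ℝ} (hh : ContDiffOn ℝ m h J) {x : Fin (m + 1) → ℝ} (hx : StrictMono x)
    (hxJ : ∀ i, x i ∈ J) (hzero : ∀ i, h (x i) = 0) : ∃ ξ ∈ J, iteratedDeriv m h ξ = 0 := by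
  induction m generalizing h with
  | zero => exact ⟨x 0, hxJ 0, hzero 0⟩
  | succ m ih =>
    have hIcc (i : Fin (m + 1)) : Set.Icc (x i.castSucc) (x i.succ) ⊆ J :=
      hJc.out (hxJ _) (hxJ _)
    have rolle (i : Fin (m + 1)) : ∃ c ∈ Set.Ioo (x i.castSucc) (x i.succ), deriv h c = 0 :=
      exists_deriv_eq_zero (hx Fin.castSucc_lt_succ) (hh.continuousOn.mono (hIcc i))
        ((hzero _).trans (hzero _).symm)
    choose z hz hz0 using rolle
    have hzJ (i : Fin (m + 1)) : z i ∈ J := hIcc i (Set.Ioo_subset_Icc_self (hz i))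
    have hzmono : StrictMono z := fun i j hij =>
      calc z i < x i.succ := (hz i).2
        _ ≤ x j.castSucc := hx.monotone (Fin.succ_le_castSucc_iff.mpr hij)
        _ < z j := (hz j).1
    obtain ⟨ξ, hξJ, hξ⟩ := ih (hh.deriv_of_isOpen hJo (by norm_cast)) hzmono hzJ hz0
    exact ⟨ξ, hξJ, by rwa [iteratedDeriv_succ']⟩

theorem exists_iteratedDeriv_eq_zero_of_injective (hJo : IsOpen J) (hJc : J.OrdConnected)
    {m : ℕ} {h : ℝ → ℝ} (hh : ContDiffOn ℝ m h J) {x : Fin (m + 1) → ℝ} (hx : Function.Injective x)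
    (hxJ : ∀ i, x i ∈ J) (hzero : ∀ i, h (x i) = 0) : ∃ ξ ∈ J, iteratedDeriv m h ξ = 0 :=
  exists_iteratedDeriv_eq_zero_of_strictMono hJo hJc hh
    ((Tuple.monotone_sort x).strictMono_of_injective (hx.comp (Tuple.sort x).injective))
    (fun _ => hxJ _) (fun _ => hzero _)

theorem exists_iteratedDeriv_eq_factorial_mul_sum_div_prod (hJo : IsOpen J)
    (hJc : J.OrdConnected) {m : ℕ} {g : ℝ → ℝ} (hg : ContDiffOn ℝ m g J) {y : Fin (m + 1) → ℝ}
    (hy : Function.Injective y) (hyJ : ∀ i, y i ∈ J) :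
    ∃ ξ ∈ J, iteratedDeriv m g ξ = m ! * ∑ i, g (y i) / ∏ j ∈ univ.erase i, (y i - y j) := by
  obtain ⟨P, hP_node, hP_deg⟩ : ∃ P : ℝ[X], (∀ i, P.eval (y i) = g (y i)) ∧
      P.degree < #(univ : Finset (Fin (m + 1))) :=
    ⟨_, fun i => Lagrange.eval_interpolate_at_node _ hy.injOn (mem_univ i),
      Lagrange.degree_interpolate_lt _ hy.injOn⟩
  have hPC : ContDiff ℝ m fun x => P.eval x := P.contDiff_aeval _
  obtain ⟨ξ, hξJ, hξ⟩ := exists_iteratedDeriv_eq_zero_of_injective hJo hJc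
    (h := fun x => g x - P.eval x) (hg.sub hPC.contDiffOn) hy hyJ
    (fun i => sub_eq_zero.mpr (hP_node i).symm)
  refine ⟨ξ, hξJ, ?_⟩
  rw [iteratedDeriv_fun_sub (hg.contDiffAt (hJo.mem_nhds hξJ)) hPC.contDiffAt,
    sub_eq_zero] at hξ
  rw [hξ, iteratedDeriv_polynomial_eval,
    Lagrange.eval_iterate_derivative_eq_sum hy.injOn hP_deg (by simp)]
  simp only [hP_node, card_univ, Fintype.card_fin, Nat.sub_self, powersetCard_zero,
    sum_singleton, Finset.prod_empty, mul_one]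

end

theorem key_sum_neg_general
    (n : ℕ) (hn : 2 ≤ n) (J : Set ℝ) (hJopen : IsOpen J) (hJconn : J.OrdConnected)
    (k : ℕ) (f : ℝ → ℝ) (hf : ContDiffOn ℝ n f J)
    (hder : ∀ x ∈ J, 0 < (-1 : ℝ) ^ (n + k) *
      iteratedDerivWithin (n - 1) (fun z => z ^ k * derivWithin f J z) J x)
    (y : Fin n → ℝ) (hyJ : ∀ i, y i ∈ J) (hinj : Function.Injective y) :
    ∑ i, derivWithin f J (y i) * (-(y i)) ^ k /
      ∏ j ∈ Finset.univ.erase i, (y j - y i) < 0 := by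
  obtain ⟨m, rfl⟩ : ∃ m, n = m + 1 := ⟨n - 1, by omega⟩
  set g : ℝ → ℝ := fun z => z ^ k * derivWithin f J z
  have hg : ContDiffOn ℝ m g J :=
    (contDiffOn_id.pow k).mul (hf.derivWithin hJopen.uniqueDiffOn (by norm_cast))
  obtain ⟨ξ, hξJ, hξ⟩ :=
    exists_iteratedDeriv_eq_factorial_mul_sum_div_prod hJopen hJconn hg hinj hyJ
  have hpos := hder ξ hξJ
  rw [Nat.add_sub_cancel, iteratedDerivWithin_of_isOpen hJopen hξJ, hξ, mul_left_comm] at hpos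
  have hterm (i : Fin (m + 1)) : derivWithin f J (y i) * (-(y i)) ^ k /
      ∏ j ∈ univ.erase i, (y j - y i) =
        -((-1) ^ (m + 1 + k) * (g (y i) / ∏ j ∈ univ.erase i, (y i - y j))) := by
    simp_rw [← neg_sub (y i)]
    rw [prod_neg, card_erase_of_mem (mem_univ i), card_univ,
      Fintype.card_fin, Nat.add_sub_cancel, neg_pow (y i), div_eq_mul_inv, mul_inv, ← inv_pow,
      inv_neg, inv_one]
    ring
  rw [sum_congr rfl fun i _ => hterm i, sum_neg_distrib, ← mul_sum, neg_lt_zero]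
  exact pos_of_mul_pos_right hpos (by positivity)

theorem key_sum_neg
    (n : ℕ) (hn : 2 ≤ n) (J : Set ℝ) (hJopen : IsOpen J) (hJconn : J.OrdConnected)
    (k : ℕ) (hk : k < n) (f : ℝ → ℝ) (hf : ContDiffOn ℝ n f J)
    (hder : ∀ x ∈ J, 0 < (-1 : ℝ) ^ (n + k) *
      iteratedDerivWithin (n - 1) (fun z => z ^ k * derivWithin f J z) J x)
    (y : Fin n → ℝ) (hyJ : ∀ i, y i ∈ J) (hinj : Function.Injective y) :
    ∑ i, derivWithin f J (y i) * (-(y i)) ^ k /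
      ∏ j ∈ Finset.univ.erase i, (y j - y i) < 0 :=
  key_sum_neg_general n hn J hJopen hJconn k f hf hder y hyJ hinj
end

section
/- Let 0 < a_1 < a_2 and A_1 > 0, A_2 > 0, and define the quartic polynomial Q(x) = (x+a_1)(x+a_2)^3 + A_1·x + A_2·x^2. Then Q does not have four real roots counted with multiplicity; equivalently, Q has at least one non-real complex root. -/
/-!
Let `y₁, …, y₄` be the negated roots. By Vieta, `∑ yᵢ = a₁ + 3a₂`, `∏ yᵢ = a₁a₂³` and
`∑ (yᵢ - a₂)² = (a₂ - a₁)² - 2A₂ < (a₂ - a₁)²`. But on the hyperplane `∑ yᵢ = a₁ + 3a₂`, strictly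
inside the sphere about `(a₂, a₂, a₂, a₂)` through `(a₁, a₂, a₂, a₂)`, the product exceeds `a₁a₂³`:
writing `y₁y₂ = p² - P` and `y₃y₄ = q² - R` with `p ≥ q` the means of the two pairs, this reduces
to a polynomial inequality in `p` alone, with a double root at `p = a₂`.
-/

open Polynomial

theorem Polynomial.card_roots_eq_natDegree_of_forall_im_eq_zero {p : ℝ[X]}
    (h : ∀ z : ℂ, aeval z p = 0 → z.im = 0) : p.roots.card = p.natDegree := by
  classical
  have hreal : ∀ z ∈ (p.map (algebraMap ℝ ℂ)).roots, z ∈ (algebraMap ℝ ℂ).range := by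
    intro z hz
    rw [mem_roots', IsRoot, eval_map_algebraMap] at hz
    exact ⟨z.re, Complex.ext (by simp) (by simp [h z hz.2])⟩
  rw [← Multiset.card_map (algebraMap ℝ ℂ),
    ← filter_roots_map_range_eq_map_roots (algebraMap ℝ ℂ).injective,
    Multiset.filter_eq_self.2 hreal, IsAlgClosed.card_roots_eq_natDegree, natDegree_map]

section OrderedField

variable {K : Type*} [Field K] [LinearOrder K] [IsStrictOrderedRing K]

theorem vieta_quartic {c₃ c₂ c₁ c₀ r₁ r₂ r₃ r₄ : K}
    (h : ∀ x : K, x ^ 4 + c₃ * x ^ 3 + c₂ * x ^ 2 + c₁ * x + c₀ =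
      (x - r₁) * (x - r₂) * (x - r₃) * (x - r₄)) :
    c₃ = -(r₁ + r₂ + r₃ + r₄) ∧
      c₂ = r₁ * r₂ + r₁ * r₃ + r₁ * r₄ + r₂ * r₃ + r₂ * r₄ + r₃ * r₄ ∧
      c₀ = r₁ * r₂ * r₃ * r₄ := by
  have h₀ := h 0
  have h₁ := h 1
  have h₂ := h (-1)
  have h₃ := h 2
  have h₄ := h (-2)
  refine ⟨?_, ?_, ?_⟩ <;> linarith

theorem lt_sub_mul_sub {X Y P R M T : K} (hX : 0 < X) (hYX : Y ≤ X) (hP : 0 ≤ P) (hR : 0 ≤ R)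
    (hPR : P + R < M) (hT : T ≤ X * (Y - M)) : T < (X - P) * (Y - R) := by
  nlinarith [mul_lt_mul_of_pos_left hPR hX, mul_nonneg hP (sub_nonneg.2 hYX), mul_nonneg hP hR]

variable {a b : K}

theorem mul_pow_three_le_of_add_eq {p q : K} (ha : 0 < a) (hab : a < b)
    (hpq : p + q = (a + 3 * b) / 2) (hqp : q ≤ p) :
    a * b ^ 3 ≤ p ^ 2 * (q ^ 2 - ((b - a) ^ 2 / 2 - (p - b) ^ 2 - (q - b) ^ 2)) := by
  obtain rfl : q = (a + 3 * b) / 2 - p := by linarith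
  have hw : 0 ≤ p - (a + 3 * b) / 4 := by linarith
  have hf : 0 ≤ 3 * (p - b) ^ 2 + 2 * (3 * b - a) * (p - b) + 3 * b * (b - a) := by
    have hd : 0 < b - a := by linarith
    have : 3 * (p - b) ^ 2 + 2 * (3 * b - a) * (p - b) + 3 * b * (b - a)
        = 3 * (p - (a + 3 * b) / 4) ^ 2 + (9 * b - a) / 2 * (p - (a + 3 * b) / 4)
          + (b - a) * (3 * (b - a) / 16 + (3 * b + a) / 2) := by ring
    rw [this]
    nlinarith [mul_nonneg (by linarith : (0 : K) ≤ 9 * b - a) hw,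
      mul_pos hd (by linarith : (0 : K) < 3 * (b - a) / 16 + (3 * b + a) / 2)]
  calc a * b ^ 3
      ≤ a * b ^ 3 + (p - b) ^ 2 *
          (3 * (p - b) ^ 2 + 2 * (3 * b - a) * (p - b) + 3 * b * (b - a)) :=
        le_add_of_nonneg_right (mul_nonneg (sq_nonneg _) hf)
    _ = _ := by ring

variable {y₁ y₂ y₃ y₄ : K}

theorem mul_pow_three_lt_prod_of_le (ha : 0 < a) (hab : a < b)
    (hsum : y₁ + y₂ + y₃ + y₄ = a + 3 * b)
    (hsq : (y₁ - b) ^ 2 + (y₂ - b) ^ 2 + (y₃ - b) ^ 2 + (y₄ - b) ^ 2 < (b - a) ^ 2)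
    (hle : y₃ + y₄ ≤ y₁ + y₂) :
    a * b ^ 3 < y₁ * y₂ * y₃ * y₄ := by
  have hpos : ∀ y, (y - b) ^ 2 < (b - a) ^ 2 → 0 < y := fun y hy => by
    linarith [(abs_lt_of_sq_lt_sq' hy (by linarith)).1]
  have hq : 0 < (y₃ + y₄) / 2 := by
    linarith [hpos y₃ (by nlinarith), hpos y₄ (by nlinarith)]
  have hqp : (y₃ + y₄) / 2 ≤ (y₁ + y₂) / 2 := by linarith
  calc a * b ^ 3
      < (((y₁ + y₂) / 2) ^ 2 - ((y₁ - y₂) / 2) ^ 2) *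
          (((y₃ + y₄) / 2) ^ 2 - ((y₃ - y₄) / 2) ^ 2) := by
        refine lt_sub_mul_sub (pow_pos (hq.trans_le hqp) 2) (pow_le_pow_left₀ hq.le hqp 2)
          (sq_nonneg _) (sq_nonneg _) ?_ (mul_pow_three_le_of_add_eq ha hab (by linarith) hqp)
        -- with `p, q` the pair means and `P, R` the squared half-differences,
        -- `∑ (yᵢ - b)² = 2 (p - b)² + 2 P + 2 (q - b)² + 2 R`
        linarith
    _ = y₁ * y₂ * y₃ * y₄ := by ring

theorem mul_pow_three_lt_prod (ha : 0 < a) (hab : a < b)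
    (hsum : y₁ + y₂ + y₃ + y₄ = a + 3 * b)
    (hsq : (y₁ - b) ^ 2 + (y₂ - b) ^ 2 + (y₃ - b) ^ 2 + (y₄ - b) ^ 2 < (b - a) ^ 2) :
    a * b ^ 3 < y₁ * y₂ * y₃ * y₄ := by
  rcases le_total (y₃ + y₄) (y₁ + y₂) with hle | hle
  · exact mul_pow_three_lt_prod_of_le ha hab hsum hsq hle
  · calc a * b ^ 3 < y₃ * y₄ * y₁ * y₂ :=
          mul_pow_three_lt_prod_of_le ha hab (by linarith) (by linarith) hle
      _ = y₁ * y₂ * y₃ * y₄ := by ring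

end OrderedField

theorem quartic_ne_prod_X_sub_C {a₁ a₂ A₁ A₂ : ℝ} (ha₁ : 0 < a₁) (ha : a₁ < a₂) (hA₂ : 0 < A₂)
    (r₁ r₂ r₃ r₄ : ℝ) :
    (X + C a₁) * (X + C a₂) ^ 3 + C A₁ * X + C A₂ * X ^ 2 ≠
      (X - C r₁) * (X - C r₂) * (X - C r₃) * (X - C r₄) := by
  intro h
  have heval (x : ℝ) : x ^ 4 + (a₁ + 3 * a₂) * x ^ 3 + (3 * a₁ * a₂ + 3 * a₂ ^ 2 + A₂) * x ^ 2
      + (3 * a₁ * a₂ ^ 2 + a₂ ^ 3 + A₁) * x + a₁ * a₂ ^ 3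
      = (x - r₁) * (x - r₂) * (x - r₃) * (x - r₄) := by
    have := congrArg (eval x) h
    simp only [eval_add, eval_mul, eval_pow, eval_sub, eval_X, eval_C] at this
    linear_combination this
  obtain ⟨hsum, he₂, hprod⟩ := vieta_quartic heval
  have hsq : (-r₁ - a₂) ^ 2 + (-r₂ - a₂) ^ 2 + (-r₃ - a₂) ^ 2 + (-r₄ - a₂) ^ 2
      = (a₂ - a₁) ^ 2 - 2 * A₂ := by
    linear_combination (r₁ + r₂ + r₃ + r₄ - a₁ - a₂) * hsum + 2 * he₂
  refine (mul_pow_three_lt_prod ha₁ ha (by linarith) (hsq.trans_lt (by linarith))).ne ?_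
  linear_combination hprod

theorem quartic_not_four_real_roots_general
    (a₁ a₂ A₁ A₂ : ℝ) (ha₁ : 0 < a₁) (ha : a₁ < a₂) (hA₂ : 0 < A₂) :
    ((X + C a₁) * (X + C a₂) ^ 3 + C A₁ * X + C A₂ * X ^ 2 : ℝ[X]).roots.card ≠ 4 ∧
    ∃ z : ℂ, z.im ≠ 0 ∧
      Polynomial.aeval z
        ((X + C a₁) * (X + C a₂) ^ 3 + C A₁ * X + C A₂ * X ^ 2 : ℝ[X]) = 0 := by
  set Q : ℝ[X] := (X + C a₁) * (X + C a₂) ^ 3 + C A₁ * X + C A₂ * X ^ 2 with hQ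
  have hmonic : Q.Monic := by rw [hQ]; monicity!
  have hdeg : Q.natDegree = 4 := by rw [hQ]; compute_degree!
  have hcard : Q.roots.card ≠ 4 := by
    intro hcard
    obtain ⟨r₁, r₂, r₃, r₄, hroots⟩ := Multiset.card_eq_four.1 hcard
    have hprod := prod_multiset_X_sub_C_of_monic_of_roots_card_eq hmonic (hcard.trans hdeg.symm)
    simp only [hroots, Multiset.insert_eq_cons, Multiset.map_cons, Multiset.map_singleton,
      Multiset.prod_cons, Multiset.prod_singleton, ← mul_assoc] at hprod
    exact quartic_ne_prod_X_sub_C ha₁ ha hA₂ r₁ r₂ r₃ r₄ hprod.symm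
  refine ⟨hcard, ?_⟩
  by_contra! hreal
  exact hcard <| hdeg ▸
    card_roots_eq_natDegree_of_forall_im_eq_zero fun z => not_imp_not.1 (hreal z)

theorem quartic_not_four_real_roots
    (a₁ a₂ A₁ A₂ : ℝ) (ha₁ : 0 < a₁) (ha : a₁ < a₂) (hA₁ : 0 < A₁) (hA₂ : 0 < A₂) :
    ((X + C a₁) * (X + C a₂) ^ 3 + C A₁ * X + C A₂ * X ^ 2 : ℝ[X]).roots.card ≠ 4 ∧
    ∃ z : ℂ, z.im ≠ 0 ∧
      Polynomial.aeval z
        ((X + C a₁) * (X + C a₂) ^ 3 + C A₁ * X + C A₂ * X ^ 2 : ℝ[X]) = 0 :=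
  quartic_not_four_real_roots_general a₁ a₂ A₁ A₂ ha₁ ha hA₂
end

section
/- Let a > 0 and let t be a real number with 0 < t < 3a/22. Then the quartic polynomial r(x) = (x+a)^4 + t·x^3 + 2·t·a·x^2 + t·(a^2 − t^2)·x = (x+a)^4 + t·x·((x+a)^2 − t^2) has four distinct real roots; in particular r(−a−2t) = t^3(10t − 3a) < 0, r(−a) = a·t^3 > 0, and r(−a+2t) = t^3(22t − 3a) < 0. -/
/-!
Between consecutive nodes `-2a < -a - 2t < -a < -a + 2t < 0` the quartic changes sign
(its values there are `a³(a - 2t) + 2at³`, `t³(10t - 3a)`, `at³`, `t³(22t - 3a)`, `a⁴`), so the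
intermediate value theorem gives four distinct zeros, and a nonzero polynomial of degree at most
four has no more.
-/

open Polynomial Set

theorem exists_mem_Ioo_eq_zero_of_mul_neg_s18 {α : Type*} [ConditionallyCompleteLinearOrder α]
    [TopologicalSpace α] [OrderTopology α] [DenselyOrdered α] {f : α → ℝ} {u v : α}
    (huv : u ≤ v) (hf : ContinuousOn f (Icc u v)) (hsign : f u * f v < 0) :
    ∃ x ∈ Ioo u v, f x = 0 := by
  rcases mul_neg_iff.1 hsign with ⟨hu, hv⟩ | ⟨hu, hv⟩
  · exact intermediate_value_Ioo' huv hf ⟨hv, hu⟩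
  · exact intermediate_value_Ioo huv hf ⟨hu, hv⟩

theorem le_encard_setOf_eq_zero_of_sign_changes {α : Type*} [ConditionallyCompleteLinearOrder α]
    [TopologicalSpace α] [OrderTopology α] [DenselyOrdered α] {f : α → ℝ} (hf : Continuous f)
    {n : ℕ} (x : Fin (n + 1) → α) (hx : StrictMono x)
    (hsign : ∀ i : Fin n, f (x i.castSucc) * f (x i.succ) < 0) :
    (n : ℕ∞) ≤ {y | f y = 0}.encard := by
  choose z hz hfz using fun i : Fin n ↦
    exists_mem_Ioo_eq_zero_of_mul_neg_s18 (hx (Fin.castSucc_lt_succ (i := i))).le hf.continuousOn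
      (hsign i)
  have hz_mono : StrictMono z := fun i j hij ↦
    calc z i < x i.succ := (hz i).2
      _ ≤ x j.castSucc := hx.monotone (Fin.succ_le_castSucc_iff.2 hij)
      _ < z j := (hz j).1
  calc (n : ℕ∞) = ENat.card (Fin n) := by simp
    _ ≤ (range z).encard := hz_mono.injective.encard_range
    _ ≤ {y | f y = 0}.encard := encard_le_encard (range_subset_iff.2 hfz)

theorem Polynomial.encard_setOf_eval_eq_zero_le {R : Type*} [CommRing R] [IsDomain R]
    {p : R[X]} (hp : p ≠ 0) : {x | p.eval x = 0}.encard ≤ p.natDegree := by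
  classical
  have hroots : {x | p.eval x = 0} = ↑p.roots.toFinset := by
    ext x; simp [mem_roots hp]
  rw [hroots, encard_coe_eq_coe_finsetCard, Nat.cast_le]
  exact (Multiset.toFinset_card_le _).trans p.card_roots'

noncomputable def quartic (a t : ℝ) : ℝ[X] :=
  (X + C a) ^ 4 + C t * X * ((X + C a) ^ 2 - C (t ^ 2))

def quarticNodes (a t : ℝ) : Fin 5 → ℝ :=
  ![-2 * a, -a - 2 * t, -a, -a + 2 * t, 0]

section Quartic

variable {a t : ℝ}

theorem eval_quartic (x : ℝ) :
    (quartic a t).eval x = (x + a) ^ 4 + t * x * ((x + a) ^ 2 - t ^ 2) := by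
  simp [quartic]

theorem natDegree_quartic_le : (quartic a t).natDegree ≤ 4 := by
  unfold quartic; compute_degree

theorem quartic_ne_zero (ha : a ≠ 0) : quartic a t ≠ 0 := fun h ↦
  pow_ne_zero 4 ha (by simpa [h] using (eval_quartic (a := a) (t := t) 0).symm)

theorem strictMono_quarticNodes (ht : 0 < t) (h2t : 2 * t < a) : StrictMono (quarticNodes a t) := by
  refine Fin.strictMono_iff_lt_succ.2 fun i ↦ ?_
  fin_cases i <;>
    dsimp only [quarticNodes, Fin.reduceFinMk, Fin.reduceCastSucc, Fin.reduceSucc, Matrix.cons_val] <;>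
    linarith

theorem quartic_sign_changes (ha : 0 < a) (ht : 0 < t) (ht' : t < 3 * a / 22) (i : Fin 4) :
    (quartic a t).eval (quarticNodes a t i.castSucc) *
      (quartic a t).eval (quarticNodes a t i.succ) < 0 := by
  have h0 : 0 < (quartic a t).eval (-2 * a) := by
    rw [eval_quartic]
    nlinarith [mul_pos (pow_pos ha 3) (show 0 < a - 2 * t by linarith), mul_pos ha (pow_pos ht 3)]
  have h1 : (quartic a t).eval (-a - 2 * t) < 0 := by
    rw [eval_quartic]; nlinarith [pow_pos ht 3]
  have h2 : 0 < (quartic a t).eval (-a) := by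
    rw [eval_quartic]; nlinarith [pow_pos ht 3]
  have h3 : (quartic a t).eval (-a + 2 * t) < 0 := by
    rw [eval_quartic]; nlinarith [pow_pos ht 3]
  have h4 : 0 < (quartic a t).eval 0 := by
    simpa [eval_quartic] using pow_pos ha 4
  fin_cases i
  · exact mul_neg_of_pos_of_neg h0 h1
  · exact mul_neg_of_neg_of_pos h1 h2
  · exact mul_neg_of_pos_of_neg h2 h3
  · exact mul_neg_of_neg_of_pos h3 h4

end Quartic

theorem quartic_four_distinct_real_roots
    (a t : ℝ) (ha : 0 < a) (ht : 0 < t) (ht' : t < 3 * a / 22) :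
    (∀ x : ℝ, (x + a) ^ 4 + t * x ^ 3 + 2 * t * a * x ^ 2 + t * (a ^ 2 - t ^ 2) * x =
        (x + a) ^ 4 + t * x * ((x + a) ^ 2 - t ^ 2)) ∧
    Set.encard {x : ℝ |
        (x + a) ^ 4 + t * x ^ 3 + 2 * t * a * x ^ 2 + t * (a ^ 2 - t ^ 2) * x = 0} = 4 ∧
    ((-a - 2 * t + a) ^ 4 + t * (-a - 2 * t) ^ 3 + 2 * t * a * (-a - 2 * t) ^ 2 +
        t * (a ^ 2 - t ^ 2) * (-a - 2 * t) = t ^ 3 * (10 * t - 3 * a)) ∧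
    t ^ 3 * (10 * t - 3 * a) < 0 ∧
    ((-a + a) ^ 4 + t * (-a) ^ 3 + 2 * t * a * (-a) ^ 2 +
        t * (a ^ 2 - t ^ 2) * (-a) = a * t ^ 3) ∧
    0 < a * t ^ 3 ∧
    ((-a + 2 * t + a) ^ 4 + t * (-a + 2 * t) ^ 3 + 2 * t * a * (-a + 2 * t) ^ 2 +
        t * (a ^ 2 - t ^ 2) * (-a + 2 * t) = t ^ 3 * (22 * t - 3 * a)) ∧
    t ^ 3 * (22 * t - 3 * a) < 0 := by
  have hB : t ^ 3 * (10 * t - 3 * a) < 0 := mul_neg_of_pos_of_neg (by positivity) (by linarith)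
  have hD : t ^ 3 * (22 * t - 3 * a) < 0 := mul_neg_of_pos_of_neg (by positivity) (by linarith)
  refine ⟨fun x ↦ by ring, ?_, by ring, hB, by ring, by positivity, by ring, hD⟩
  have heval : ∀ x, (x + a) ^ 4 + t * x ^ 3 + 2 * t * a * x ^ 2 + t * (a ^ 2 - t ^ 2) * x =
      (quartic a t).eval x := fun x ↦ by rw [eval_quartic]; ring
  simp only [heval]
  refine le_antisymm ?_ ?_
  · exact (encard_setOf_eval_eq_zero_le (quartic_ne_zero ha.ne')).trans
      (by exact_mod_cast natDegree_quartic_le)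
  · exact le_encard_setOf_eq_zero_of_sign_changes (quartic a t).continuous _
      (strictMono_quarticNodes ht (by linarith)) (quartic_sign_changes ha ht ht')
end
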